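/- arXiv:1511.05911 — 7 statements merged into one kernel-verified Lean document; each statement's English description precedes it below -/
import Mathlib

section
/- Let g1 and g2 be T-connected temporal graph patterns with g1 a subgraph of g2. If s' and s'' are two sequences of consecutive growth steps that, starting from g1, produce patterns g'2 and g''2 respectively with g'2 =_t g2 and g''2 =_t g2, then s' = s'' (the two sequences add edges with the same endpoints and timestamps in the same order). In particular, either there exists a unique way to grow g1 into g2 by consecutive growth, or there is no way to grow g1 into g2. -/
/-- A temporal graph: a finite set of nodes (natural numbers), a finite set of
directed timestamped edges `(u, v, t)` with pairwise distinct timestamps, and a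
node-labeling function into a label type `σ`. -/
structure TemporalGraph (σ : Type) where
  V : Finset ℕ
  E : Finset (ℕ × ℕ × ℕ)
  A : ℕ → σ
  mem_src : ∀ e ∈ E, e.1 ∈ V
  mem_dst : ∀ e ∈ E, e.2.1 ∈ V
  time_inj : ∀ e ∈ E, ∀ e' ∈ E, e.2.2 = e'.2.2 → e = e'

namespace TemporalGraph

variable {σ : Type}

/-- The set of edge timestamps of a temporal graph. -/
def times (G : TemporalGraph σ) : Finset ℕ := G.E.image fun e => e.2.2

/-- A temporal graph pattern: the edge timestamps are exactly `{1, …, |E|}`. -/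
def IsPattern (g : TemporalGraph σ) : Prop := g.times = Finset.Icc 1 g.E.card

/-- `f, τ` witness that `g` is a temporal subgraph of `G`:
`f` maps nodes injectively preserving labels, `τ` maps timestamps injectively,
edges are mapped to edges, and the temporal (total) edge order is preserved. -/
def IsTSubWith (g G : TemporalGraph σ) (f τ : ℕ → ℕ) : Prop :=
  Set.MapsTo f ↑g.V ↑G.V ∧ Set.InjOn f ↑g.V ∧
  Set.MapsTo τ ↑g.times ↑G.times ∧ Set.InjOn τ ↑g.times ∧
  (∀ u ∈ g.V, g.A u = G.A (f u)) ∧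
  (∀ e ∈ g.E, (f e.1, f e.2.1, τ e.2.2) ∈ G.E) ∧
  (∀ e ∈ g.E, ∀ e' ∈ g.E, (e.2.2 < e'.2.2 ↔ τ e.2.2 < τ e'.2.2))

/-- `g ⊆_t G` : `g` is a temporal subgraph of `G`. -/
def IsTSub (g G : TemporalGraph σ) : Prop := ∃ f τ, IsTSubWith g G f τ

/-- `f, τ` witness that `G` is a match of `g` (`G =_t g`): the witnessing
functions are bijective between the node sets and between the timestamp sets. -/
def IsMatchWith (g G : TemporalGraph σ) (f τ : ℕ → ℕ) : Prop :=
  IsTSubWith g G f τ ∧ Set.BijOn f ↑g.V ↑G.V ∧ Set.BijOn τ ↑g.times ↑G.times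

/-- `G` is a match of `g`, i.e. `G =_t g`. -/
def IsMatchOf (G g : TemporalGraph σ) : Prop := ∃ f τ, IsMatchWith g G f τ

/-- `v` is incident to some edge in the edge set `E`. -/
def Incident (E : Finset (ℕ × ℕ × ℕ)) (v : ℕ) : Prop := ∃ e ∈ E, v = e.1 ∨ v = e.2.1

/-- Undirected adjacency induced by an edge set (edge directions ignored). -/
def AdjIn (E : Finset (ℕ × ℕ × ℕ)) (u v : ℕ) : Prop := ∃ t, (u, v, t) ∈ E ∨ (v, u, t) ∈ E

/-- The edge set `E` forms a connected (undirected) graph on the nodes incident to it. -/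
def ConnectedOn (E : Finset (ℕ × ℕ × ℕ)) : Prop :=
  ∀ u v, Incident E u → Incident E v → Relation.ReflTransGen (AdjIn E) u v

/-- The edges of `G` with timestamp at most `t`. -/
def edgesUpTo (G : TemporalGraph σ) (t : ℕ) : Finset (ℕ × ℕ × ℕ) :=
  G.E.filter fun e => e.2.2 ≤ t

/-- T-connectivity: every node is incident to an edge, and for every edge
timestamp `t` the edges with timestamps at most `t` form a connected
(undirected) graph on the nodes incident to those edges. -/
def TConnected (G : TemporalGraph σ) : Prop :=
  (∀ v ∈ G.V, Incident G.E v) ∧ ∀ t ∈ G.times, ConnectedOn (G.edgesUpTo t)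

/-- A single consecutive growth step: `g'` is obtained from the T-connected
pattern `g` by adding the new edge `(u, v, |E|+1)`, and `g'` is again a
T-connected temporal graph pattern. -/
def GrowStep (g g' : TemporalGraph σ) (u v : ℕ) : Prop :=
  g.IsPattern ∧ g.TConnected ∧ g'.IsPattern ∧ g'.TConnected ∧
  g'.E = insert (u, v, g.E.card + 1) g.E ∧
  g'.V = insert u (insert v g.V) ∧
  (∀ w ∈ g.V, g'.A w = g.A w)

/-- `GrowSeq g s g'` : `g'` is obtained from `g` by the sequence of consecutive
growth steps adding the edges (endpoint pairs) listed in `s`, in order. -/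
inductive GrowSeq : TemporalGraph σ → List (ℕ × ℕ) → TemporalGraph σ → Prop
  | nil (g : TemporalGraph σ) : GrowSeq g [] g
  | cons {g h g' : TemporalGraph σ} {u v : ℕ} {s : List (ℕ × ℕ)} :
      GrowStep g h u v → GrowSeq h s g' → GrowSeq g ((u, v) :: s) g'

/-- `H` is a subgraph of `G`. -/
def IsSubgraphOf (H G : TemporalGraph σ) : Prop :=
  H.V ⊆ G.V ∧ H.E ⊆ G.E ∧ H.A = G.A

/-- `H` is a subgraph of `G` that is a match of the pattern `g`,
i.e. `H ∈ 𝕄(G, g)`. -/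
def MatchIn (H G g : TemporalGraph σ) : Prop := IsSubgraphOf H G ∧ IsMatchOf H g

/-- The largest edge timestamp of a temporal graph (`0` if there are no edges). -/
def maxTime (H : TemporalGraph σ) : ℕ := H.E.sup fun e => e.2.2

/-- The edge set of the residual graph `R(G, H)`: all edges of `G` whose
timestamp is strictly larger than the largest edge timestamp of `H`.
(The residual graph is determined by this edge set: its nodes are the nodes
incident to these edges and its labels are those of `G`.) -/
def resEdges (G H : TemporalGraph σ) : Finset (ℕ × ℕ × ℕ) :=
  G.E.filter fun e => maxTime H < e.2.2

/-- Multiplicity of the residual graph (with edge set) `R` in the multiset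
`{R(G, G') : G' ∈ 𝕄(G, g)}`. -/
noncomputable def resCount (G g : TemporalGraph σ) (R : Finset (ℕ × ℕ × ℕ)) : ℕ :=
  Set.ncard {H : TemporalGraph σ | MatchIn H G g ∧ resEdges G H = R}

/-- `ℝ(𝔾, g₁) = ℝ(𝔾, g₂)` as multisets of pairs `(G, R(G, G'))`. -/
def ResEq (𝔾 : Set (TemporalGraph σ)) (g₁ g₂ : TemporalGraph σ) : Prop :=
  ∀ G ∈ 𝔾, ∀ R : Finset (ℕ × ℕ × ℕ), resCount G g₁ R = resCount G g₂ R

/-- The frequency of a pattern `g` with respect to a finite set `𝔾` of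
temporal graphs. -/
noncomputable def freq (𝔾 : Set (TemporalGraph σ)) (g : TemporalGraph σ) : ℝ :=
  (Set.ncard {G ∈ 𝔾 | IsTSub g G} : ℝ) / (Set.ncard 𝔾 : ℝ)

/-- The residual node label set `𝕃(𝔾, g)`: all labels of nodes of residual
graphs occurring in `ℝ(𝔾, g)`. -/
def resLabels (𝔾 : Set (TemporalGraph σ)) (g : TemporalGraph σ) : Set σ :=
  {ℓ | ∃ G ∈ 𝔾, ∃ H, MatchIn H G g ∧ ∃ e ∈ resEdges G H, G.A e.1 = ℓ ∨ G.A e.2.1 = ℓ}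

/-- `I(𝔾, g)`: the sum of `|R(G, G')|` over all elements of `ℝ(𝔾, g)`. -/
noncomputable def resSum (𝔾 : Set (TemporalGraph σ)) (g : TemporalGraph σ) : ℕ :=
  ∑ᶠ G ∈ 𝔾, ∑ᶠ K ∈ {K : TemporalGraph σ | MatchIn K G g}, (resEdges G K).card


/-- The canonical fresh node with respect to a node set. -/
def freshNode (s : Finset ℕ) : ℕ := s.sup id + 1

/-- A consecutive growth step in which any newly introduced node gets the
canonical fresh identifier (patterns grown this way are canonical
representatives of abstract temporal graph patterns). -/
def GrowStepC (g g' : TemporalGraph σ) (u v : ℕ) : Prop :=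
  GrowStep g g' u v ∧ (u ∉ g.V → u = freshNode g.V) ∧
    (v ∉ g.V ∧ v ≠ u → v = freshNode (insert u g.V))

/-- A sequence of consecutive growth steps, recording the endpoints of the
added edges in order (the timestamps of the added edges are `|E|+1, |E|+2, …`). -/
inductive GrowSeqC : TemporalGraph σ → List (ℕ × ℕ) → TemporalGraph σ → Prop
  | nil (g : TemporalGraph σ) : GrowSeqC g [] g
  | cons {g h g' : TemporalGraph σ} {u v : ℕ} {s : List (ℕ × ℕ)} :
      GrowStepC g h u v → GrowSeqC h s g' → GrowSeqC g ((u, v) :: s) g'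
lemma card_times_eq (G : TemporalGraph σ) : G.times.card = G.E.card :=
  Finset.card_image_of_injOn (fun e he e' he' h => G.time_inj e he e' he' h)

lemma match_card {h G : TemporalGraph σ} {f τ : ℕ → ℕ}
    (hm : IsMatchWith h G f τ) : h.E.card = G.E.card := by
  have hbij := hm.2.2
  have himg : (↑G.times : Set ℕ) = τ '' ↑h.times := hbij.image_eq.symm
  have h1 : (↑G.times : Set ℕ).ncard = (↑h.times : Set ℕ).ncard := by
    rw [himg, Set.ncard_image_of_injOn hbij.injOn]
  rw [Set.ncard_coe_finset, Set.ncard_coe_finset, card_times_eq, card_times_eq] at h1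
  omega

/-- For a match between patterns, the timestamp map is the identity. -/
lemma tau_id {h G : TemporalGraph σ} {f τ : ℕ → ℕ}
    (hh : h.IsPattern) (hG : G.IsPattern) (hm : IsMatchWith h G f τ) :
    ∀ t ∈ h.times, τ t = t := by
  set n := h.E.card with hn
  have hcard : G.E.card = n := (match_card hm).symm
  have htimesh : h.times = Finset.Icc 1 n := hh
  have htimesG : G.times = Finset.Icc 1 n := by rw [hG, hcard]
  have hmaps : ∀ t ∈ Finset.Icc 1 n, τ t ∈ Finset.Icc 1 n := by
    intro t ht
    have ht' : t ∈ (↑h.times : Set ℕ) := by rw [htimesh]; exact_mod_cast ht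
    have h2 := hm.1.2.2.1 ht'
    rw [htimesG] at h2; exact_mod_cast h2
  have hmono : ∀ a ∈ Finset.Icc 1 n, ∀ b ∈ Finset.Icc 1 n, a < b → τ a < τ b := by
    intro a ha b hb hab
    rw [← htimesh] at ha hb
    obtain ⟨e, he, hea⟩ := Finset.mem_image.mp ha
    obtain ⟨e', he', heb⟩ := Finset.mem_image.mp hb
    have := hm.1.2.2.2.2.2.2 e he e' he'
    rw [hea, heb] at this
    exact this.mp hab
  have hle : ∀ t, t ∈ Finset.Icc 1 n → t ≤ τ t := by
    intro t
    induction t using Nat.strong_induction_on with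
    | _ t ih =>
      intro ht
      have h1 : 1 ≤ t ∧ t ≤ n := Finset.mem_Icc.mp ht
      have hτt := Finset.mem_Icc.mp (hmaps t ht)
      rcases Nat.eq_or_lt_of_le h1.1 with h2 | h2
      · omega
      · have ht' : t - 1 ∈ Finset.Icc 1 n := Finset.mem_Icc.mpr (by omega)
        have h3 := ih (t - 1) (by omega) ht'
        have h4 := hmono (t - 1) ht' t ht (by omega)
        omega
  have hinj : ∀ a ∈ Finset.Icc 1 n, ∀ b ∈ Finset.Icc 1 n, τ a = τ b → a = b := by
    intro a ha b hb hab
    have ha' : a ∈ (↑h.times : Set ℕ) := by rw [htimesh]; exact_mod_cast ha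
    have hb' : b ∈ (↑h.times : Set ℕ) := by rw [htimesh]; exact_mod_cast hb
    exact hm.1.2.2.2.1 ha' hb' hab
  have himg : (Finset.Icc 1 n).image τ = Finset.Icc 1 n := by
    apply Finset.eq_of_subset_of_card_le
    · intro y hy
      obtain ⟨x, hx, rfl⟩ := Finset.mem_image.mp hy
      exact hmaps x hx
    · rw [Finset.card_image_of_injOn hinj]
  have hsum : ∑ t ∈ Finset.Icc 1 n, τ t = ∑ t ∈ Finset.Icc 1 n, t := by
    conv_rhs => rw [← himg]
    rw [Finset.sum_image hinj]
  have := (Finset.sum_eq_sum_iff_of_le (fun i hi => hle i hi)).mp hsum.symm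
  intro t ht
  rw [htimesh] at ht
  exact (this t ht).symm

lemma growStepC_card {g g' : TemporalGraph σ} {u v : ℕ} (h : GrowStepC g g' u v) :
    g'.E.card = g.E.card + 1 := by
  obtain ⟨⟨hp, _, _, _, hE, hV, _⟩, _, _⟩ := h
  rw [hE, Finset.card_insert_of_notMem]
  intro hmem
  have : g.E.card + 1 ∈ g.times := Finset.mem_image_of_mem _ hmem
  rw [hp, Finset.mem_Icc] at this
  omega

lemma growSeqC_facts {g h : TemporalGraph σ} {s : List (ℕ × ℕ)} (hs : GrowSeqC g s h) :
    g.E ⊆ h.E ∧ g.V ⊆ h.V ∧ h.E.card = g.E.card + s.length ∧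
      (g.IsPattern → h.IsPattern) := by
  induction hs with
  | nil g => simp
  | @cons g h g' u v s step rest ih =>
    obtain ⟨hE1, hV1, hcard1, hpat1⟩ := ih
    have hc := growStepC_card step
    obtain ⟨⟨_, _, hp', _, hE, hV, _⟩, _, _⟩ := step
    refine ⟨fun e he => hE1 ?_, fun w hw => hV1 ?_, by simp; omega, fun _ => hpat1 hp'⟩
    · rw [hE]; exact Finset.mem_insert_of_mem he
    · rw [hV]; exact Finset.mem_insert_of_mem (Finset.mem_insert_of_mem hw)

lemma growSeqC_unique_aux (g₂ : TemporalGraph σ) (hp₂ : g₂.IsPattern) :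
    ∀ (s' : List (ℕ × ℕ)) (s'' : List (ℕ × ℕ)) (g g' h' h'' : TemporalGraph σ)
      (f₁ τ₁ f₂ τ₂ : ℕ → ℕ),
      g.V = g'.V → g.E = g'.E →
      GrowSeqC g s' h' → GrowSeqC g' s'' h'' →
      IsMatchWith h' g₂ f₁ τ₁ → IsMatchWith h'' g₂ f₂ τ₂ →
      s' = s'' := by
  intro s'
  induction s' with
  | nil =>
    intro s'' g g' h' h'' f₁ τ₁ f₂ τ₂ hV hE hg hg' hm₁ hm₂
    obtain ⟨_, _, hc1, _⟩ := growSeqC_facts hg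
    obtain ⟨_, _, hc2, _⟩ := growSeqC_facts hg'
    have hmc1 := match_card hm₁
    have hmc2 := match_card hm₂
    have hcc : g.E.card = g'.E.card := by rw [hE]
    simp only [List.length_nil] at hc1
    have hz : s''.length = 0 := by omega
    exact (List.eq_nil_of_length_eq_zero hz).symm
  | cons uv s ih =>
    intro s'' g g' h' h'' f₁ τ₁ f₂ τ₂ hVgg hEgg hg hg' hm₁ hm₂
    obtain ⟨u, v⟩ := uv
    -- lengths agree, so s'' is a cons
    have hlen : s''.length = s.length + 1 := by
      obtain ⟨_, _, hc1, _⟩ := growSeqC_facts hg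
      obtain ⟨_, _, hc2, _⟩ := growSeqC_facts hg'
      have hmc1 := match_card hm₁
      have hmc2 := match_card hm₂
      have hcc : g.E.card = g'.E.card := by rw [hEgg]
      simp only [List.length_cons] at hc1
      omega
    obtain ⟨⟨u'', v''⟩, t, rfl⟩ : ∃ p t, s'' = p :: t := by
      cases s'' with
      | nil => simp at hlen
      | cons a b => exact ⟨a, b, rfl⟩
    obtain ⟨h₁, step, rest⟩ : ∃ h₁, GrowStepC g h₁ u v ∧ GrowSeqC h₁ s h' := by
      cases hg with
      | cons st r => exact ⟨_, st, r⟩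
    obtain ⟨h₂, step'', rest''⟩ : ∃ h₂, GrowStepC g' h₂ u'' v'' ∧ GrowSeqC h₂ t h'' := by
      cases hg' with
      | cons st r => exact ⟨_, st, r⟩
    obtain ⟨gs, hfreshu, hfreshv⟩ := step
    obtain ⟨hpg, hcg, hph₁, hch₁, hE₁, hV₁, _⟩ := gs
    obtain ⟨gs'', hfreshu'', hfreshv''⟩ := step''
    obtain ⟨hpg', hcg', hph₂, hch₂, hE₂, hV₂, _⟩ := gs''
    set k := g.E.card with hk
    have hkk : g'.E.card = k := by rw [hk, hEgg]
    -- containments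
    obtain ⟨hE₁sub, hV₁sub, _, hpat₁⟩ := growSeqC_facts rest
    obtain ⟨hE₂sub, hV₂sub, _, hpat₂⟩ := growSeqC_facts rest''
    have hph' : h'.IsPattern := hpat₁ hph₁
    have hph'' : h''.IsPattern := hpat₂ hph₂
    have hτ₁ := tau_id hph' hp₂ hm₁
    have hτ₂ := tau_id hph'' hp₂ hm₂
    -- edges map with identity timestamps
    have edge₁ : ∀ e ∈ h'.E, (f₁ e.1, f₁ e.2.1, e.2.2) ∈ g₂.E := by
      intro e he
      have h1 := hm₁.1.2.2.2.2.2.1 e he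
      rwa [hτ₁ e.2.2 (Finset.mem_image_of_mem _ he)] at h1
    have edge₂ : ∀ e ∈ h''.E, (f₂ e.1, f₂ e.2.1, e.2.2) ∈ g₂.E := by
      intro e he
      have h1 := hm₂.1.2.2.2.2.2.1 e he
      rwa [hτ₂ e.2.2 (Finset.mem_image_of_mem _ he)] at h1
    have hkey : ∀ a b c d t : ℕ, (a, b, t) ∈ g₂.E → (c, d, t) ∈ g₂.E → a = c ∧ b = d := by
      intro a b c d t h1 h2
      have h3 := g₂.time_inj _ h1 _ h2 rfl
      rw [Prod.mk.injEq, Prod.mk.injEq] at h3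
      exact ⟨h3.1, h3.2.1⟩
    -- node memberships
    have hgVsub₁ : g.V ⊆ h'.V := by
      intro w hw
      apply hV₁sub
      rw [hV₁]; exact Finset.mem_insert_of_mem (Finset.mem_insert_of_mem hw)
    have hgVsub₂ : g'.V ⊆ h''.V := by
      intro w hw
      apply hV₂sub
      rw [hV₂]; exact Finset.mem_insert_of_mem (Finset.mem_insert_of_mem hw)
    have hu₁ : u ∈ h'.V := hV₁sub (by rw [hV₁]; exact Finset.mem_insert_self _ _)
    have hv₁ : v ∈ h'.V := by
      apply hV₁sub
      rw [hV₁]; exact Finset.mem_insert_of_mem (Finset.mem_insert_self _ _)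
    have hu₂ : u'' ∈ h''.V := hV₂sub (by rw [hV₂]; exact Finset.mem_insert_self _ _)
    have hv₂ : v'' ∈ h''.V := by
      apply hV₂sub
      rw [hV₂]; exact Finset.mem_insert_of_mem (Finset.mem_insert_self _ _)
    have inj₁ : ∀ a ∈ h'.V, ∀ b ∈ h'.V, f₁ a = f₁ b → a = b := by
      intro a ha b hb hab
      exact hm₁.1.2.1 (Finset.mem_coe.mpr ha) (Finset.mem_coe.mpr hb) hab
    have inj₂ : ∀ a ∈ h''.V, ∀ b ∈ h''.V, f₂ a = f₂ b → a = b := by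
      intro a ha b hb hab
      exact hm₂.1.2.1 (Finset.mem_coe.mpr ha) (Finset.mem_coe.mpr hb) hab
    -- rigidity: f₁ = f₂ on g.V
    have hfw : ∀ w ∈ g.V, f₁ w = f₂ w := by
      intro w hw
      obtain ⟨e, heE, hwe⟩ := hcg.1 w hw
      have he1 : e ∈ h₁.E := by rw [hE₁]; exact Finset.mem_insert_of_mem heE
      have he2 : e ∈ h₂.E := by rw [hE₂]; exact Finset.mem_insert_of_mem (hEgg ▸ heE)
      have h1 := edge₁ e (hE₁sub he1)
      have h2 := edge₂ e (hE₂sub he2)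
      obtain ⟨hq1, hq2⟩ := hkey _ _ _ _ _ h1 h2
      rcases hwe with rfl | rfl
      · exact hq1
      · exact hq2
    -- the two new edges map to the same edge of g₂
    have hne₁' : (u, v, k + 1) ∈ h₁.E := by rw [hE₁]; exact Finset.mem_insert_self _ _
    have hne₂' : (u'', v'', k + 1) ∈ h₂.E := by
      rw [hE₂, hkk]; exact Finset.mem_insert_self _ _
    have hne₁ : (u, v, k + 1) ∈ h'.E := hE₁sub hne₁'
    have hne₂ : (u'', v'', k + 1) ∈ h''.E := hE₂sub hne₂' 
    have hee₁ : (f₁ u, f₁ v, k + 1) ∈ g₂.E := edge₁ _ hne₁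
    have hee₂ : (f₂ u'', f₂ v'', k + 1) ∈ g₂.E := edge₂ _ hne₂
    obtain ⟨hfu, hfv⟩ := hkey _ _ _ _ _ hee₁ hee₂
    -- u = u''
    have huu : u = u'' := by
      by_cases hu : u ∈ g.V
      · exact inj₂ u (hgVsub₂ (hVgg ▸ hu)) u'' hu₂ (by rw [← hfw u hu, hfu])
      · have hu'' : u'' ∉ g'.V := by
          intro hmem
          have hmemg : u'' ∈ g.V := hVgg ▸ hmem
          have : f₁ u = f₁ u'' := by rw [hfu, hfw u'' hmemg]
          have : u = u'' := inj₁ u hu₁ u'' (hgVsub₁ hmemg) this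
          exact hu (this ▸ hmemg)
        rw [hfreshu hu, hfreshu'' hu'', hVgg]
    -- v = v''
    have hvv : v = v'' := by
      by_cases hv : v ∈ g.V
      · exact inj₂ v (hgVsub₂ (hVgg ▸ hv)) v'' hv₂ (by rw [← hfw v hv, hfv])
      · by_cases hvu : v = u
        · subst hvu
          exact inj₂ v (huu ▸ hu₂) v'' hv₂ (by rw [huu, ← hfu, hfv])
        · have hv'' : v'' ∉ g'.V := by
            intro hmem
            have hmemg : v'' ∈ g.V := hVgg ▸ hmem
            have : f₁ v = f₁ v'' := by rw [hfv, hfw v'' hmemg]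
            have : v = v'' := inj₁ v hv₁ v'' (hgVsub₁ hmemg) this
            exact hv (this ▸ hmemg)
          have hvu'' : v'' ≠ u'' := by
            intro hvu''
            have : f₁ v = f₁ u := by rw [hfv, hvu'', ← hfu]
            exact hvu (inj₁ v hv₁ u hu₁ this)
          rw [hfreshv ⟨hv, hvu⟩, hfreshv'' ⟨hv'', hvu''⟩, huu, hVgg]
    -- tail equality by induction
    have htail : s = t := by
      apply ih t h₁ h₂ h' h'' f₁ τ₁ f₂ τ₂ _ _ rest rest'' hm₁ hm₂
      · rw [hV₁, hV₂, huu, hvv, hVgg]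
      · rw [hE₁, hE₂, huu, hvv, hEgg, hkk]
    rw [huu, hvv, htail]

/-- Let `g₁` and `g₂` be T-connected temporal graph patterns with
`g₁` a (temporal) subgraph of `g₂`.  If `s'` and `s''` are two sequences of
consecutive growth steps that, starting from `g₁`, produce patterns `h'` and
`h''` respectively with `h' =_t g₂` and `h'' =_t g₂`, then `s' = s''`:
the two sequences add edges with the same endpoints and timestamps in the same
order.  In particular, either there is a unique way to grow `g₁` into `g₂` by
consecutive growth, or there is no way at all. -/
theorem grow_sequence_unique (g₁ g₂ : TemporalGraph σ)
    (hp₁ : g₁.IsPattern) (hp₂ : g₂.IsPattern)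
    (hc₁ : g₁.TConnected) (hc₂ : g₂.TConnected)
    (hsub : IsTSub g₁ g₂)
    (s' s'' : List (ℕ × ℕ)) (h' h'' : TemporalGraph σ)
    (hgrow' : GrowSeqC g₁ s' h') (hgrow'' : GrowSeqC g₁ s'' h'')
    (hmatch' : IsMatchOf g₂ h') (hmatch'' : IsMatchOf g₂ h'') :
    s' = s'' := by
  obtain ⟨f₁, τ₁, hm₁⟩ := hmatch'
  obtain ⟨f₂, τ₂, hm₂⟩ := hmatch''
  exact growSeqC_unique_aux g₂ hp₂ s' s'' g₁ g₁ h' h'' f₁ τ₁ f₂ τ₂ rfl rfl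
    hgrow' hgrow'' hm₁ hm₂

end TemporalGraph
end

section
/- Let g be a T-connected temporal graph pattern with m ≥ 2 edges in which every node is incident to at least one edge, and let g⁻ be the graph obtained from g by deleting the edge with timestamp m together with any node thereby left isolated. Then g⁻ is a T-connected temporal graph pattern with m − 1 edges in which every node is incident to at least one edge, and g is obtained from g⁻ by a single consecutive growth step that is a forward, backward, or inward growth. -/
namespace TemporalGraph

variable {σ : Type}

/-- Let `g` be a T-connected temporal graph pattern with `m ≥ 2`
edges in which every node is incident to at least one edge, and let `g⁻` be
obtained from `g` by deleting the edge with timestamp `m` together with any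
node thereby left isolated.  Then `g⁻` is a T-connected temporal graph pattern
with `m - 1` edges in which every node is incident to at least one edge, and
`g` is obtained from `g⁻` by a single consecutive growth step that is a
forward, backward, or inward growth. -/
theorem delete_last_edge (g : TemporalGraph σ)
    (hp : g.IsPattern) (hc : g.TConnected) (hm : 2 ≤ g.E.card)
    (hi : ∀ v ∈ g.V, Incident g.E v) :
    ∃ gm : TemporalGraph σ,
      gm.E = (g.E.filter fun e => e.2.2 ≠ g.E.card) ∧
      gm.V = (g.E.filter fun e => e.2.2 ≠ g.E.card).biUnion (fun e => {e.1, e.2.1}) ∧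
      gm.A = g.A ∧
      gm.IsPattern ∧ gm.TConnected ∧ gm.E.card = g.E.card - 1 ∧
      (∀ v ∈ gm.V, Incident gm.E v) ∧
      ∃ u v : ℕ, GrowStep gm g u v ∧
        ((u ∈ gm.V ∧ v ∉ gm.V) ∨ (u ∉ gm.V ∧ v ∈ gm.V) ∨ (u ∈ gm.V ∧ v ∈ gm.V)) := by
  classical
  set m := g.E.card with hm_def
  have hmem : m ∈ g.times := by
    rw [hp]; exact Finset.mem_Icc.2 ⟨by omega, le_rfl⟩
  obtain ⟨e₀, he₀E, he₀t⟩ := Finset.mem_image.1 hmem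
  obtain ⟨u, v, t₀⟩ := e₀
  simp only at he₀t
  subst he₀t
  have huniq : ∀ e ∈ g.E, e.2.2 = m → e = (u, v, m) := fun e he ht =>
    g.time_inj e he (u, v, m) he₀E ht
  have htb : ∀ e ∈ g.E, 1 ≤ e.2.2 ∧ e.2.2 ≤ m := by
    intro e he
    have : e.2.2 ∈ g.times := Finset.mem_image_of_mem _ he
    rw [hp] at this; exact Finset.mem_Icc.1 this
  set Em := g.E.filter (fun e => e.2.2 ≠ m) with hEm_def
  set Vm := Em.biUnion (fun e => {e.1, e.2.1}) with hVm_def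
  have hVm_mem : ∀ w, w ∈ Vm ↔ ∃ e ∈ g.E, e.2.2 ≠ m ∧ (w = e.1 ∨ w = e.2.1) := by
    intro w
    simp only [hVm_def, Finset.mem_biUnion, hEm_def, Finset.mem_filter, Finset.mem_insert,
      Finset.mem_singleton]
    constructor
    · rintro ⟨e, ⟨he, ht⟩, hcase⟩
      exact ⟨e, he, ht, hcase⟩
    · rintro ⟨e, he, ht, hcase⟩
      exact ⟨e, ⟨he, ht⟩, hcase⟩
  have hEm_erase : Em = g.E.erase (u, v, m) := by
    ext e
    simp only [hEm_def, Finset.mem_filter, Finset.mem_erase]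
    constructor
    · rintro ⟨he, ht⟩
      exact ⟨fun h => ht (by rw [h]), he⟩
    · rintro ⟨hne, he⟩
      exact ⟨he, fun ht => hne (huniq e he ht)⟩
  have hcardEm : Em.card = m - 1 := by
    rw [hEm_erase, Finset.card_erase_of_mem he₀E]
  have hpatEm : (Em.image fun e => e.2.2) = Finset.Icc 1 (m - 1) := by
    ext t
    simp only [Finset.mem_image, hEm_def, Finset.mem_filter, Finset.mem_Icc]
    constructor
    · rintro ⟨e, ⟨he, hne⟩, rfl⟩
      have := htb e he; omega
    · rintro ⟨h1, h2⟩
      have : t ∈ g.times := by rw [hp]; exact Finset.mem_Icc.2 ⟨h1, by omega⟩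
      obtain ⟨e, he, rfl⟩ := Finset.mem_image.1 this
      exact ⟨e, ⟨he, by omega⟩, rfl⟩
  have hup : ∀ t, t ≤ m - 1 → (Em.filter fun e => e.2.2 ≤ t) = g.edgesUpTo t := by
    intro t ht
    ext e
    simp only [edgesUpTo, hEm_def, Finset.mem_filter]
    constructor
    · rintro ⟨⟨he, _⟩, h2⟩; exact ⟨he, h2⟩
    · rintro ⟨he, h2⟩; exact ⟨⟨he, by omega⟩, h2⟩
  refine ⟨⟨Vm, Em, g.A, ?_, ?_, ?_⟩, rfl, rfl, rfl, ?_, ?_, ?_, ?_, ?_⟩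
  · intro e he
    exact Finset.mem_biUnion.2 ⟨e, he, Finset.mem_insert_self _ _⟩
  · intro e he
    exact Finset.mem_biUnion.2 ⟨e, he, Finset.mem_insert_of_mem (Finset.mem_singleton_self _)⟩
  · intro e he e' he' h
    exact g.time_inj e (Finset.mem_filter.1 he).1 e' (Finset.mem_filter.1 he').1 h
  · show (Em.image fun e => e.2.2) = Finset.Icc 1 Em.card
    rw [hcardEm, hpatEm]
  · constructor
    · intro w hw
      obtain ⟨e, he, hcase⟩ := Finset.mem_biUnion.1 hw
      simp only [Finset.mem_insert, Finset.mem_singleton] at hcase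
      exact ⟨e, he, hcase⟩
    · intro t ht
      have ht' : t ≤ m - 1 ∧ 1 ≤ t := by
        have : t ∈ Finset.Icc 1 (m - 1) := hpatEm ▸ ht
        have := Finset.mem_Icc.1 this; omega
      show ConnectedOn (Em.filter fun e => e.2.2 ≤ t)
      rw [hup t ht'.1]
      apply hc.2
      rw [hp]; exact Finset.mem_Icc.2 ⟨ht'.2, by omega⟩
  · exact hcardEm
  · intro w hw
    obtain ⟨e, he, hcase⟩ := Finset.mem_biUnion.1 hw
    simp only [Finset.mem_insert, Finset.mem_singleton] at hcase
    exact ⟨e, he, hcase⟩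
  · refine ⟨u, v, ⟨?_, ?_, hp, hc, ?_, ?_, fun _ _ => rfl⟩, ?_⟩
    · show (Em.image fun e => e.2.2) = Finset.Icc 1 Em.card
      rw [hcardEm, hpatEm]
    · constructor
      · intro w hw
        obtain ⟨e, he, hcase⟩ := Finset.mem_biUnion.1 hw
        simp only [Finset.mem_insert, Finset.mem_singleton] at hcase
        exact ⟨e, he, hcase⟩
      · intro t ht
        have ht' : t ≤ m - 1 ∧ 1 ≤ t := by
          have : t ∈ Finset.Icc 1 (m - 1) := hpatEm ▸ ht
          have := Finset.mem_Icc.1 this; omega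
        show ConnectedOn (Em.filter fun e => e.2.2 ≤ t)
        rw [hup t ht'.1]
        apply hc.2
        rw [hp]; exact Finset.mem_Icc.2 ⟨ht'.2, by omega⟩
    · show g.E = insert (u, v, Em.card + 1) Em
      have : Em.card + 1 = m := by omega
      rw [this]
      ext e
      simp only [Finset.mem_insert, hEm_def, Finset.mem_filter]
      constructor
      · intro he
        by_cases ht : e.2.2 = m
        · exact Or.inl (huniq e he ht)
        · exact Or.inr ⟨he, ht⟩
      · rintro (rfl | ⟨he, _⟩)
        · exact he₀E
        · exact he
    · show g.V = insert u (insert v Vm)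
      ext w
      simp only [Finset.mem_insert]
      constructor
      · intro hw
        obtain ⟨e, he, hcase⟩ := hi w hw
        by_cases ht : e.2.2 = m
        · have heq := huniq e he ht
          subst heq
          rcases hcase with rfl | rfl
          · exact Or.inl rfl
          · exact Or.inr (Or.inl rfl)
        · exact Or.inr (Or.inr ((hVm_mem w).2 ⟨e, he, ht, hcase⟩))
      · rintro (rfl | rfl | hw)
        · exact g.mem_src _ he₀E
        · exact g.mem_dst _ he₀E
        · obtain ⟨e, he, _, hcase⟩ := (hVm_mem w).1 hw
          rcases hcase with rfl | rfl
          · exact g.mem_src _ he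
          · exact g.mem_dst _ he
    · by_cases hu : u ∈ Vm <;> by_cases hv : v ∈ Vm
      · exact Or.inr (Or.inr ⟨hu, hv⟩)
      · exact Or.inl ⟨hu, hv⟩
      · exact Or.inr (Or.inl ⟨hu, hv⟩)
      · exfalso
        have h1 : (m - 1) ∈ g.times := by
          rw [hp]; exact Finset.mem_Icc.2 ⟨by omega, by omega⟩
        obtain ⟨e₁, he₁E, he₁t⟩ := Finset.mem_image.1 h1
        have he₁ne : e₁.2.2 ≠ m := by omega
        have hw : e₁.1 ∈ Vm := (hVm_mem _).2 ⟨e₁, he₁E, he₁ne, Or.inl rfl⟩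
        have hconn := hc.2 m hmem
        have hEeq : g.edgesUpTo m = g.E :=
          Finset.filter_true_of_mem fun e he => (htb e he).2
        rw [hEeq] at hconn
        have hreach := hconn u e₁.1 ⟨(u, v, m), he₀E, Or.inl rfl⟩ ⟨e₁, he₁E, Or.inl rfl⟩
        have key : ∀ x, Relation.ReflTransGen (AdjIn g.E) u x → x = u ∨ x = v := by
          intro x hx
          induction hx with
          | refl => exact Or.inl rfl
          | @tail b c hseg hadj ih =>
            obtain ⟨t, hE | hE⟩ := hadj
            · by_cases ht : t = m
              · subst ht
                have heq := huniq (b, c, m) hE rfl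
                simp only [Prod.mk.injEq] at heq
                exact Or.inr heq.2.1
              · have hbVm : b ∈ Vm := (hVm_mem b).2 ⟨(b, c, t), hE, ht, Or.inl rfl⟩
                rcases ih with rfl | rfl
                · exact absurd hbVm hu
                · exact absurd hbVm hv
            · by_cases ht : t = m
              · subst ht
                have heq := huniq (c, b, m) hE rfl
                simp only [Prod.mk.injEq] at heq
                exact Or.inl heq.1
              · have hbVm : b ∈ Vm := (hVm_mem b).2 ⟨(c, b, t), hE, ht, Or.inr rfl⟩
                rcases ih with rfl | rfl
                · exact absurd hbVm hu
                · exact absurd hbVm hv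
        rcases key _ hreach with h | h
        · rw [h] at hw; exact hu hw
        · rw [h] at hw; exact hv hw


end TemporalGraph
end

section
/- Let F be a discriminative score function, let 𝔾_p and 𝔾_n be finite nonempty sets of temporal graphs, and let g ⊆_t g' be temporal graph patterns. Then F(freq(𝔾_p, g'), freq(𝔾_n, g')) ≤ F(freq(𝔾_p, g), 0), i.e., F(freq(𝔾_p, g), 0) is an upper bound on the discriminative score of every pattern g' that is a temporal supergraph of g. -/
namespace TemporalGraph

variable {σ : Type}

theorem IsTSub.trans {g g' G : TemporalGraph σ} (h1 : IsTSub g g') (h2 : IsTSub g' G) :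
    IsTSub g G := by
  obtain ⟨f, τ, hfV, hfinj, hτT, hτinj, hA, hE, hord⟩ := h1
  obtain ⟨f', τ', hfV', hfinj', hτT', hτinj', hA', hE', hord'⟩ := h2
  refine ⟨f' ∘ f, τ' ∘ τ, hfV'.comp hfV, hfinj'.comp hfinj hfV,
    hτT'.comp hτT, hτinj'.comp hτinj hτT, ?_, ?_, ?_⟩
  · intro u hu
    simp only [Function.comp]
    rw [hA u hu, hA' (f u) (hfV hu)]
  · intro e he
    exact hE' _ (hE e he)
  · intro e he e' he'
    simp only [Function.comp]
    rw [hord e he e' he',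
      hord' (f e.1, f e.2.1, τ e.2.2) (hE e he) (f e'.1, f e'.2.1, τ e'.2.2) (hE e' he')]

theorem freq_nonneg (𝔾 : Set (TemporalGraph σ)) (g : TemporalGraph σ) : 0 ≤ freq 𝔾 g := by
  unfold freq; positivity

theorem freq_le_one {𝔾 : Set (TemporalGraph σ)} (hfin : 𝔾.Finite) (g : TemporalGraph σ) :
    freq 𝔾 g ≤ 1 := by
  unfold freq
  rcases eq_or_ne (Set.ncard 𝔾) 0 with h | h
  · simp [h]
  · rw [div_le_one (by positivity)]
    exact_mod_cast Set.ncard_le_ncard (Set.sep_subset _ _) hfin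

theorem freq_mono {𝔾 : Set (TemporalGraph σ)} (hfin : 𝔾.Finite) {g g' : TemporalGraph σ}
    (hsub : IsTSub g g') : freq 𝔾 g' ≤ freq 𝔾 g := by
  unfold freq
  have h : ({G ∈ 𝔾 | IsTSub g' G} : Set (TemporalGraph σ)).ncard ≤
      ({G ∈ 𝔾 | IsTSub g G} : Set (TemporalGraph σ)).ncard :=
    Set.ncard_le_ncard (fun G hG => ⟨hG.1, hsub.trans hG.2⟩)
      (hfin.subset (Set.sep_subset _ _))
  rcases eq_or_ne (Set.ncard 𝔾) 0 with h0 | h0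
  · simp [h0]
  · exact div_le_div_of_nonneg_right (by exact_mod_cast h)
      (by positivity) |>.trans_eq rfl

/-- For a discriminative score function `F` (non-decreasing in the
first argument, non-increasing in the second argument, on `[0,1] × [0,1]`),
finite nonempty sets `𝔾p`, `𝔾n` of temporal graphs and patterns `g ⊆_t g'`,
the score of `g'` is at most the upper bound `F(freq(𝔾p, g), 0)`. -/
theorem score_upper_bound (F : ℝ → ℝ → ℝ)
    (hmono : ∀ x₁ x₂ y : ℝ, 0 ≤ x₁ → x₁ ≤ x₂ → x₂ ≤ 1 → 0 ≤ y → y ≤ 1 → F x₁ y ≤ F x₂ y)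
    (hanti : ∀ x y₁ y₂ : ℝ, 0 ≤ x → x ≤ 1 → 0 ≤ y₁ → y₁ ≤ y₂ → y₂ ≤ 1 → F x y₂ ≤ F x y₁)
    (𝔾p 𝔾n : Set (TemporalGraph σ))
    (hpfin : 𝔾p.Finite) (hpne : 𝔾p.Nonempty) (hnfin : 𝔾n.Finite) (hnne : 𝔾n.Nonempty)
    (g g' : TemporalGraph σ) (hp : g.IsPattern) (hp' : g'.IsPattern)
    (hsub : IsTSub g g') :
    F (freq 𝔾p g') (freq 𝔾n g') ≤ F (freq 𝔾p g) 0 := by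
  calc F (freq 𝔾p g') (freq 𝔾n g')
      ≤ F (freq 𝔾p g') 0 :=
        hanti _ _ _ (freq_nonneg _ _) (freq_le_one hpfin _) le_rfl (freq_nonneg _ _)
          (freq_le_one hnfin _)
    _ ≤ F (freq 𝔾p g) 0 :=
        hmono _ _ _ (freq_nonneg _ _) (freq_mono hpfin hsub) (freq_le_one hpfin _)
          le_rfl zero_le_one

end TemporalGraph
end

section
/- Let g1 and g2 be temporal graph patterns in which every node is incident to at least one edge, and suppose there exist two distinct pairs (f, τ) ≠ (f', τ') of injective mappings witnessing g1 ⊆_t g2. Then for every temporal graph G and every match G' of g2 in G, the subgraph G' contains at least two distinct subgraphs that are matches of g1. -/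
namespace TemporalGraph

variable {σ : Type}

section Aux

variable {σ : Type}

/-- Membership of a time in `times`. -/
lemma mem_times_of_mem {g : TemporalGraph σ} {e : ℕ × ℕ × ℕ} (he : e ∈ g.E) :
    e.2.2 ∈ g.times := Finset.mem_image_of_mem _ he

/-- The order-preservation condition, stated on all times. -/
lemma times_lt {g h : TemporalGraph σ} {φ ψ : ℕ → ℕ} (hs : IsTSubWith g h φ ψ) :
    ∀ t ∈ g.times, ∀ t' ∈ g.times, (t < t' ↔ ψ t < ψ t') := by
  intro t ht t' ht'
  obtain ⟨e, he, rfl⟩ := Finset.mem_image.mp ht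
  obtain ⟨e', he', rfl⟩ := Finset.mem_image.mp ht'
  exact hs.2.2.2.2.2.2 e he e' he'

/-- Composition of temporal subgraph witnesses. -/
lemma comp_tsub {g h k : TemporalGraph σ} {f τ F T : ℕ → ℕ}
    (h1 : IsTSubWith g h f τ) (h2 : IsTSubWith h k F T) :
    IsTSubWith g k (F ∘ f) (T ∘ τ) := by
  obtain ⟨a1, a2, a3, a4, a5, a6, a7⟩ := h1
  obtain ⟨b1, b2, b3, b4, b5, b6, b7⟩ := h2
  refine ⟨b1.comp a1, ?_, b3.comp a3, ?_, ?_, ?_, ?_⟩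
  · exact Set.InjOn.comp b2 a2 a1
  · exact Set.InjOn.comp b4 a4 a3
  · intro u hu
    rw [a5 u hu, b5 (f u) (a1 hu)]; rfl
  · intro e he
    exact b6 _ (a6 e he)
  · intro e he e' he'
    rw [a7 e he e' he']
    exact b7 _ (a6 e he) _ (a6 e' he')

/-- Two strictly order-preserving maps on a finset of naturals with the same
image agree on the finset. -/
lemma eqOn_of_image_eq :
    ∀ (s : Finset ℕ) (a b : ℕ → ℕ),
      (∀ x ∈ s, ∀ y ∈ s, (x < y ↔ a x < a y)) →
      (∀ x ∈ s, ∀ y ∈ s, (x < y ↔ b x < b y)) →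
      s.image a = s.image b → ∀ x ∈ s, a x = b x := by
  intro s
  induction s using Finset.strongInduction with
  | _ s ih =>
    intro a b ha hb him x hx
    have hs : s.Nonempty := ⟨x, hx⟩
    set m := s.min' hs with hm
    have hms : m ∈ s := s.min'_mem hs
    -- a maps min to min of image
    have hminA : ∀ (c : ℕ → ℕ), (∀ x ∈ s, ∀ y ∈ s, (x < y ↔ c x < c y)) →
        ∀ z ∈ s, c m ≤ c z := by
      intro c hc z hz
      rcases eq_or_lt_of_le (s.min'_le z hz) with h | h
      · exact le_of_eq (congrArg c (hm.trans h))
      · exact le_of_lt ((hc m hms z hz).mp h)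
    have himab : a m = b m := by
      have h1 : a m ∈ s.image b := him ▸ Finset.mem_image_of_mem a hms
      have h2 : b m ∈ s.image a := him ▸ Finset.mem_image_of_mem b hms
      obtain ⟨z1, hz1, hz1e⟩ := Finset.mem_image.mp h1
      obtain ⟨z2, hz2, hz2e⟩ := Finset.mem_image.mp h2
      have l1 : b m ≤ a m := hz1e ▸ hminA b hb z1 hz1
      have l2 : a m ≤ b m := hz2e ▸ hminA a ha z2 hz2
      omega
    rcases eq_or_ne x m with rfl | hxm
    · exact himab
    · -- use induction hypothesis on s.erase m
      have hsub : s.erase m ⊂ s := Finset.erase_ssubset hms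
      have hinj : ∀ (c : ℕ → ℕ), (∀ x ∈ s, ∀ y ∈ s, (x < y ↔ c x < c y)) →
          ∀ z ∈ s, z ≠ m → c z ≠ c m := by
        intro c hc z hz hzm
        have : m < z := lt_of_le_of_ne (s.min'_le z hz) (Ne.symm hzm)
        have := (hc m hms z hz).mp this
        omega
      have himg : ∀ (c : ℕ → ℕ), (∀ x ∈ s, ∀ y ∈ s, (x < y ↔ c x < c y)) →
          (s.erase m).image c = (s.image c).erase (c m) := by
        intro c hc
        ext y
        simp only [Finset.mem_image, Finset.mem_erase]
        constructor
        · rintro ⟨z, ⟨hzm, hz⟩, rfl⟩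
          exact ⟨hinj c hc z hz hzm, z, hz, rfl⟩
        · rintro ⟨hy, z, hz, rfl⟩
          refine ⟨z, ⟨?_, hz⟩, rfl⟩
          rintro rfl; exact hy rfl
      have him' : (s.erase m).image a = (s.erase m).image b := by
        rw [himg a ha, himg b hb, him, himab]
      exact ih (s.erase m) hsub a b
        (fun u hu v hv => ha u (Finset.mem_of_mem_erase hu) v (Finset.mem_of_mem_erase hv))
        (fun u hu v hv => hb u (Finset.mem_of_mem_erase hu) v (Finset.mem_of_mem_erase hv))
        him' x (Finset.mem_erase.mpr ⟨hxm, hx⟩)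

/-- The image of a pattern under a temporal-subgraph witness. -/
def imageGraph (g : TemporalGraph σ) (A' : ℕ → σ) (φ ψ : ℕ → ℕ)
    (hψ : Set.InjOn ψ ↑g.times) : TemporalGraph σ where
  V := g.V.image φ
  E := g.E.image fun e => (φ e.1, φ e.2.1, ψ e.2.2)
  A := A'
  mem_src := by
    intro e he
    obtain ⟨e₀, he₀, rfl⟩ := Finset.mem_image.mp he
    exact Finset.mem_image_of_mem _ (g.mem_src e₀ he₀)
  mem_dst := by
    intro e he
    obtain ⟨e₀, he₀, rfl⟩ := Finset.mem_image.mp he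
    exact Finset.mem_image_of_mem _ (g.mem_dst e₀ he₀)
  time_inj := by
    intro e he e' he' ht
    obtain ⟨e₀, he₀, rfl⟩ := Finset.mem_image.mp he
    obtain ⟨e₀', he₀', rfl⟩ := Finset.mem_image.mp he'
    have : e₀.2.2 = e₀'.2.2 :=
      hψ (mem_times_of_mem he₀) (mem_times_of_mem he₀') ht
    rw [g.time_inj e₀ he₀ e₀' he₀' this]

lemma imageGraph_times (g : TemporalGraph σ) (A' : ℕ → σ) (φ ψ : ℕ → ℕ)
    (hψ : Set.InjOn ψ ↑g.times) :
    (imageGraph g A' φ ψ hψ).times = g.times.image ψ := by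
  simp only [times, imageGraph, Finset.image_image]
  rfl

/-- The image of a pattern under a t-subgraph witness is a subgraph that is a
match of the pattern. -/
lemma imageGraph_spec {g h : TemporalGraph σ} {φ ψ : ℕ → ℕ}
    (hs : IsTSubWith g h φ ψ) :
    IsSubgraphOf (imageGraph g h.A φ ψ hs.2.2.2.1) h ∧
      IsMatchOf (imageGraph g h.A φ ψ hs.2.2.2.1) g := by
  obtain ⟨a1, a2, a3, a4, a5, a6, a7⟩ := hs
  set H := imageGraph g h.A φ ψ a4 with hH
  have hHV : H.V = g.V.image φ := rfl
  have hHE : H.E = g.E.image fun e => (φ e.1, φ e.2.1, ψ e.2.2) := rfl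
  have hHt : H.times = g.times.image ψ := imageGraph_times g h.A φ ψ a4
  constructor
  · refine ⟨?_, ?_, rfl⟩
    · rw [hHV]
      intro x hx
      obtain ⟨u, hu, rfl⟩ := Finset.mem_image.mp hx
      exact a1 hu
    · rw [hHE]
      intro e he
      obtain ⟨e₀, he₀, rfl⟩ := Finset.mem_image.mp he
      exact a6 e₀ he₀
  · refine ⟨φ, ψ, ⟨⟨?_, a2, ?_, a4, ?_, ?_, a7⟩, ?_, ?_⟩⟩
    · intro u hu
      exact Finset.mem_coe.mpr (hHV ▸ Finset.mem_image_of_mem φ hu)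
    · intro t ht
      exact Finset.mem_coe.mpr (hHt ▸ Finset.mem_image_of_mem ψ ht)
    · intro u hu; exact a5 u hu
    · intro e he
      exact hHE ▸ Finset.mem_image_of_mem _ he
    · have : (↑H.V : Set ℕ) = φ '' ↑g.V := by rw [hHV, Finset.coe_image]
      rw [this]
      exact a2.bijOn_image
    · have : (↑H.times : Set ℕ) = ψ '' ↑g.times := by rw [hHt, Finset.coe_image]
      rw [this]
      exact a4.bijOn_image

end Aux

/-- Let `g₁` and `g₂` be temporal graph patterns in which every
node is incident to at least one edge, and suppose there exist two distinct
pairs `(f, τ) ≠ (f', τ')` of injective mappings witnessing `g₁ ⊆_t g₂`.  Then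
for every temporal graph `G` and every match `G'` of `g₂` in `G`, the subgraph
`G'` contains at least two distinct subgraphs that are matches of `g₁`. -/
theorem two_witnesses_give_two_matches (g₁ g₂ : TemporalGraph σ)
    (hp₁ : g₁.IsPattern) (hp₂ : g₂.IsPattern)
    (hi₁ : ∀ v ∈ g₁.V, Incident g₁.E v) (hi₂ : ∀ v ∈ g₂.V, Incident g₂.E v)
    (f τ f' τ' : ℕ → ℕ)
    (hw : IsTSubWith g₁ g₂ f τ) (hw' : IsTSubWith g₁ g₂ f' τ')
    (hne : ¬ (Set.EqOn f f' ↑g₁.V ∧ Set.EqOn τ τ' ↑g₁.times)) :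
    ∀ G G' : TemporalGraph σ, MatchIn G' G g₂ →
      ∃ H₁ H₂ : TemporalGraph σ, H₁ ≠ H₂ ∧
        IsSubgraphOf H₁ G' ∧ IsMatchOf H₁ g₁ ∧
        IsSubgraphOf H₂ G' ∧ IsMatchOf H₂ g₁ := by
  rintro G G' ⟨-, F, T, hFT, hbF, hbT⟩
  have c₁ : IsTSubWith g₁ G' (F ∘ f) (T ∘ τ) := comp_tsub hw hFT
  have c₂ : IsTSubWith g₁ G' (F ∘ f') (T ∘ τ') := comp_tsub hw' hFT
  refine ⟨imageGraph g₁ G'.A (F ∘ f) (T ∘ τ) c₁.2.2.2.1,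
          imageGraph g₁ G'.A (F ∘ f') (T ∘ τ') c₂.2.2.2.1,
          ?_, (imageGraph_spec c₁).1, (imageGraph_spec c₁).2,
          (imageGraph_spec c₂).1, (imageGraph_spec c₂).2⟩
  intro heq
  apply hne
  have hE : (g₁.E.image fun e => ((F ∘ f) e.1, (F ∘ f) e.2.1, (T ∘ τ) e.2.2))
      = g₁.E.image fun e => ((F ∘ f') e.1, (F ∘ f') e.2.1, (T ∘ τ') e.2.2) :=
    congrArg TemporalGraph.E heq
  -- times agree
  have htimes : g₁.times.image (T ∘ τ) = g₁.times.image (T ∘ τ') := by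
    have := congrArg TemporalGraph.times heq
    rwa [imageGraph_times, imageGraph_times] at this
  have hτeq : ∀ t ∈ g₁.times, (T ∘ τ) t = (T ∘ τ') t :=
    eqOn_of_image_eq g₁.times (T ∘ τ) (T ∘ τ') (times_lt c₁) (times_lt c₂) htimes
  -- edges agree componentwise
  have hfe : ∀ e ∈ g₁.E, F (f e.1) = F (f' e.1) ∧ F (f e.2.1) = F (f' e.2.1) := by
    intro e he
    have h1 : ((F ∘ f) e.1, (F ∘ f) e.2.1, (T ∘ τ) e.2.2)
        ∈ g₁.E.image fun e => ((F ∘ f') e.1, (F ∘ f') e.2.1, (T ∘ τ') e.2.2) :=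
      hE ▸ Finset.mem_image_of_mem _ he
    obtain ⟨e', he', heq'⟩ := Finset.mem_image.mp h1
    -- both edges are in G'.E with equal timestamps
    have hm1 : ((F ∘ f) e.1, (F ∘ f) e.2.1, (T ∘ τ) e.2.2) ∈ G'.E := c₁.2.2.2.2.2.1 e he
    have hm2 : ((F ∘ f') e.1, (F ∘ f') e.2.1, (T ∘ τ') e.2.2) ∈ G'.E := c₂.2.2.2.2.2.1 e he
    have hteq : (T ∘ τ) e.2.2 = (T ∘ τ') e.2.2 := hτeq e.2.2 (mem_times_of_mem he)
    have := G'.time_inj _ hm1 _ hm2 hteq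
    exact ⟨congrArg Prod.fst this, congrArg (fun p => p.2.1) this⟩
  have hFinj := hFT.2.1
  have hfmap := hw.1
  have hfmap' := hw'.1
  constructor
  · intro v hv
    obtain ⟨e, he, hor⟩ := hi₁ v hv
    have h1 : f e.1 ∈ (↑g₂.V : Set ℕ) := hfmap (g₁.mem_src e he)
    have h1' : f' e.1 ∈ (↑g₂.V : Set ℕ) := hfmap' (g₁.mem_src e he)
    have h2 : f e.2.1 ∈ (↑g₂.V : Set ℕ) := hfmap (g₁.mem_dst e he)
    have h2' : f' e.2.1 ∈ (↑g₂.V : Set ℕ) := hfmap' (g₁.mem_dst e he)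
    rcases hor with rfl | rfl
    · exact hFinj h1 h1' (hfe e he).1
    · exact hFinj h2 h2' (hfe e he).2
  · intro t ht
    have h1 : τ t ∈ (↑g₂.times : Set ℕ) := hw.2.2.1 ht
    have h2 : τ' t ∈ (↑g₂.times : Set ℕ) := hw'.2.2.1 ht
    exact hbT.injOn h1 h2 (hτeq t ht)

end TemporalGraph
end

section
/- Correctness of the clique reduction: let H be a finite simple undirected graph on vertex set {1, …, n} with n ≥ 2, and let k satisfy 2 ≤ k ≤ n. Then H contains a clique on k vertices if and only if T_k(K_k) ⊆_t T_n(H). -/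
namespace TemporalGraph

variable {σ : Type}

/-- Timestamps of the form `n ^ a + b` with `1 ≤ a`, `1 ≤ b ≤ n` determine
`a` and `b` when `n ≥ 2`. -/
theorem pow_add_inj {n a b a' b' : ℕ} (hn : 2 ≤ n)
    (ha : 1 ≤ a) (ha' : 1 ≤ a') (hb : 1 ≤ b) (hbn : b ≤ n) (hb' : 1 ≤ b') (hb'n : b' ≤ n)
    (h : n ^ a + b = n ^ a' + b') : a = a' ∧ b = b' := by
  have key : ∀ x y : ℕ, 1 ≤ x → 1 ≤ y → x < y → n ^ x + n ≤ n ^ y := by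
    intro x y hx hy hxy
    have h1 : n ^ x + n ≤ n ^ (x + 1) := by
      have hnx : n ≤ n ^ x := by
        calc n = n ^ 1 := (pow_one n).symm
        _ ≤ n ^ x := Nat.pow_le_pow_right (by omega) hx
      have : n ^ (x + 1) = n ^ x * n := pow_succ n x
      nlinarith
    have h2 : n ^ (x + 1) ≤ n ^ y := Nat.pow_le_pow_right (by omega) (by omega)
    omega
  rcases lt_trichotomy a a' with hlt | heq | hgt
  · have := key a a' ha ha' hlt
    omega
  · subst heq
    omega
  · have := key a' a ha' ha hgt
    omega

/-- The temporal graph `T_n(H)` associated with a finite simple undirected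
graph `H` on the vertex set `{1, …, n}` (encoded on `Fin n`, with vertex `i`
of `Fin n` corresponding to the node `i + 1`): every node carries the same
label, and each undirected edge `{u, v}` of `H` yields the two directed
timestamped edges `(u, v, n ^ u + v)` and `(v, u, n ^ v + u)`. -/
def ofSimpleGraph (n : ℕ) (hn : 2 ≤ n) (H : SimpleGraph (Fin n)) [DecidableRel H.Adj] :
    TemporalGraph Unit where
  V := Finset.Icc 1 n
  E := (Finset.univ.filter fun p : Fin n × Fin n => H.Adj p.1 p.2).image
        fun p => ((p.1 : ℕ) + 1, (p.2 : ℕ) + 1, n ^ ((p.1 : ℕ) + 1) + ((p.2 : ℕ) + 1))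
  A := fun _ => ()
  mem_src := by
    intro e he
    simp only [Finset.mem_image, Finset.mem_filter] at he
    obtain ⟨p, _, rfl⟩ := he
    have := p.1.isLt
    simp only [Finset.mem_Icc]
    omega
  mem_dst := by
    intro e he
    simp only [Finset.mem_image, Finset.mem_filter] at he
    obtain ⟨p, _, rfl⟩ := he
    have := p.2.isLt
    simp only [Finset.mem_Icc]
    omega
  time_inj := by
    intro e he e' he' ht
    simp only [Finset.mem_image, Finset.mem_filter] at he he'
    obtain ⟨p, _, rfl⟩ := he
    obtain ⟨q, _, rfl⟩ := he'
    have hp1 := p.1.isLt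
    have hp2 := p.2.isLt
    have hq1 := q.1.isLt
    have hq2 := q.2.isLt
    have := pow_add_inj (a := (p.1 : ℕ) + 1) (b := (p.2 : ℕ) + 1)
      (a' := (q.1 : ℕ) + 1) (b' := (q.2 : ℕ) + 1) hn
      (by omega) (by omega) (by omega) (by omega) (by omega) (by omega) ht
    have e1 : p.1 = q.1 := Fin.ext (by omega)
    have e2 : p.2 = q.2 := Fin.ext (by omega)
    rw [e1, e2]

private lemma pow_step {m x y : ℕ} (hm : 2 ≤ m) (hx : 1 ≤ x) (hxy : x < y) :
    m ^ x + m ≤ m ^ y := by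
  have h1 : m ^ x + m ≤ m ^ (x + 1) := by
    have hmx : m ≤ m ^ x := by
      calc m = m ^ 1 := (pow_one m).symm
      _ ≤ m ^ x := Nat.pow_le_pow_right (by omega) hx
    have : m ^ (x + 1) = m ^ x * m := pow_succ m x
    nlinarith
  have h2 : m ^ (x + 1) ≤ m ^ y := Nat.pow_le_pow_right (by omega) (by omega)
  omega

private lemma lex_lt_iff {m a b a' b' : ℕ} (hm : 2 ≤ m)
    (ha : 1 ≤ a) (hb : 1 ≤ b) (hbm : b ≤ m) (ha' : 1 ≤ a') (hb' : 1 ≤ b') (hb'm : b' ≤ m) :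
    m ^ a + b < m ^ a' + b' ↔ (a < a' ∨ (a = a' ∧ b < b')) := by
  constructor
  · intro hlt
    rcases lt_trichotomy a a' with h | h | h
    · exact Or.inl h
    · exact Or.inr ⟨h, by subst h; omega⟩
    · exact absurd hlt (by have := pow_step hm ha' h; omega)
  · rintro (h | ⟨rfl, h⟩)
    · have := pow_step hm ha h; omega
    · omega

private lemma log_decode {m a b : ℕ} (hm : 2 ≤ m) (ha : 1 ≤ a) (hb : 1 ≤ b) (hbm : b ≤ m) :
    Nat.log m (m ^ a + b - 1) = a ∧ (m ^ a + b) - m ^ a = b := by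
  refine ⟨Nat.log_eq_of_pow_le_of_lt_pow (by omega) ?_, by omega⟩
  have := pow_step hm ha (show a < a + 1 by omega); omega

private lemma mem_ofSimpleGraph_E {n : ℕ} {hn : 2 ≤ n} {H : SimpleGraph (Fin n)}
    [DecidableRel H.Adj] {e : ℕ × ℕ × ℕ} :
    e ∈ (ofSimpleGraph n hn H).E ↔ ∃ p : Fin n × Fin n, H.Adj p.1 p.2 ∧
      e = ((p.1 : ℕ) + 1, (p.2 : ℕ) + 1, n ^ ((p.1 : ℕ) + 1) + ((p.2 : ℕ) + 1)) := by
  simp only [ofSimpleGraph, Finset.mem_image, Finset.mem_filter, Finset.mem_univ, true_and]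
  constructor
  · rintro ⟨p, hp, rfl⟩; exact ⟨p, hp, rfl⟩
  · rintro ⟨p, hp, rfl⟩; exact ⟨p, hp, rfl⟩

private lemma mem_ofSimpleGraph_times {n : ℕ} {hn : 2 ≤ n} {H : SimpleGraph (Fin n)}
    [DecidableRel H.Adj] {t : ℕ} :
    t ∈ (ofSimpleGraph n hn H).times ↔ ∃ p : Fin n × Fin n, H.Adj p.1 p.2 ∧
      t = n ^ ((p.1 : ℕ) + 1) + ((p.2 : ℕ) + 1) := by
  simp only [times, Finset.mem_image]
  constructor
  · rintro ⟨e, he, rfl⟩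
    obtain ⟨p, hp, rfl⟩ := mem_ofSimpleGraph_E.mp he
    exact ⟨p, hp, rfl⟩
  · rintro ⟨p, hp, rfl⟩
    exact ⟨_, mem_ofSimpleGraph_E.mpr ⟨p, hp, rfl⟩, rfl⟩

/-- Correctness of the clique reduction.  Let `H` be a finite
simple undirected graph on the vertex set `{1, …, n}` with `n ≥ 2`, and let
`2 ≤ k ≤ n`.  Then `H` contains a clique on `k` vertices iff
`T_k(K_k) ⊆_t T_n(H)`, where `K_k` is the complete graph on `{1, …, k}`. -/
theorem clique_reduction_correct (n k : ℕ) (hn : 2 ≤ n) (hk : 2 ≤ k) (hkn : k ≤ n)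
    (H : SimpleGraph (Fin n)) [DecidableRel H.Adj] :
    (∃ s : Finset (Fin n), H.IsNClique k s) ↔
      IsTSub (ofSimpleGraph k hk (⊤ : SimpleGraph (Fin k))) (ofSimpleGraph n hn H) := by
  constructor
  · rintro ⟨s, hs⟩
    have hcard : s.card = k := hs.2
    set g : Fin k → Fin n := fun i => ((s.orderIsoOfFin hcard) i : Fin n) with hg
    have hgmono : StrictMono g := fun i j hij => by
      exact_mod_cast (s.orderIsoOfFin hcard).strictMono hij
    have hgmem : ∀ i, g i ∈ s := fun i => ((s.orderIsoOfFin hcard) i).2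
    set f : ℕ → ℕ := fun x => if hx : x - 1 < k then ((g ⟨x - 1, hx⟩ : ℕ) + 1) else 0 with hf
    have hfval : ∀ i : Fin k, f ((i : ℕ) + 1) = (g i : ℕ) + 1 := by
      intro i
      have hi : (i : ℕ) + 1 - 1 < k := by simpa using i.isLt
      simp only [hf, dif_pos hi]
      congr 1
    have hfrange : ∀ x, 1 ≤ x → x ≤ k → 1 ≤ f x ∧ f x ≤ n := by
      intro x hx1 hxk
      have hx : x - 1 < k := by omega
      have := (g ⟨x - 1, hx⟩).isLt
      simp only [hf, dif_pos hx]
      omega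
    have hfmono : ∀ x y, 1 ≤ x → x ≤ k → 1 ≤ y → y ≤ k → (x < y ↔ f x < f y) := by
      intro x y hx1 hxk hy1 hyk
      have hx : x - 1 < k := by omega
      have hy : y - 1 < k := by omega
      simp only [hf, dif_pos hx, dif_pos hy]
      constructor
      · intro hxy
        have : (⟨x - 1, hx⟩ : Fin k) < ⟨y - 1, hy⟩ := by simp [Fin.lt_def]; omega
        have h2 : ((g ⟨x - 1, hx⟩ : Fin n) : ℕ) < ((g ⟨y - 1, hy⟩ : Fin n) : ℕ) := hgmono this
        omega
      · intro hfxy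
        by_contra hc
        push_neg at hc
        rcases Nat.lt_or_ge y x with h | h
        · have : (⟨y - 1, hy⟩ : Fin k) < ⟨x - 1, hx⟩ := by simp [Fin.lt_def]; omega
          have h2 : ((g ⟨y - 1, hy⟩ : Fin n) : ℕ) < ((g ⟨x - 1, hx⟩ : Fin n) : ℕ) := hgmono this
          omega
        · have : x = y := by omega
          subst this; omega
    set τ : ℕ → ℕ := fun t => n ^ f (Nat.log k (t - 1)) + f (t - k ^ Nat.log k (t - 1)) with hτ
    have hτval : ∀ a b, 1 ≤ a → a ≤ k → 1 ≤ b → b ≤ k →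
        τ (k ^ a + b) = n ^ f a + f b := by
      intro a b ha1 hak hb1 hbk
      obtain ⟨h1, h2⟩ := log_decode hk ha1 hb1 hbk
      simp only [hτ, h1, h2]
    -- decode pattern times
    have hptime : ∀ t ∈ (ofSimpleGraph k hk (⊤ : SimpleGraph (Fin k))).times,
        ∃ a b, 1 ≤ a ∧ a ≤ k ∧ 1 ≤ b ∧ b ≤ k ∧ a ≠ b ∧ t = k ^ a + b := by
      intro t ht
      obtain ⟨p, hp, rfl⟩ := mem_ofSimpleGraph_times.mp ht
      have h1 := p.1.isLt
      have h2 := p.2.isLt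
      have hne : p.1 ≠ p.2 := by simpa using hp
      exact ⟨(p.1 : ℕ) + 1, (p.2 : ℕ) + 1, by omega, by omega, by omega, by omega,
        by simpa [Fin.val_inj] using hne, rfl⟩
    have hadj : ∀ a b : Fin k, a ≠ b → H.Adj (g a) (g b) := by
      intro a b hab
      exact hs.1 (hgmem a) (hgmem b) fun h => hab (hgmono.injective h)
    -- key: edges map to edges
    have hedge : ∀ e ∈ (ofSimpleGraph k hk (⊤ : SimpleGraph (Fin k))).E,
        (f e.1, f e.2.1, τ e.2.2) ∈ (ofSimpleGraph n hn H).E := by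
      intro e he
      obtain ⟨p, hp, rfl⟩ := mem_ofSimpleGraph_E.mp he
      have hne : p.1 ≠ p.2 := by simpa using hp
      refine mem_ofSimpleGraph_E.mpr ⟨(g p.1, g p.2), hadj _ _ hne, ?_⟩
      have h1 := p.1.isLt
      have h2 := p.2.isLt
      rw [hτval _ _ (by omega) (by omega) (by omega) (by omega), hfval, hfval]
    -- order iff for pattern times
    have horder : ∀ t ∈ (ofSimpleGraph k hk (⊤ : SimpleGraph (Fin k))).times,
        ∀ t' ∈ (ofSimpleGraph k hk (⊤ : SimpleGraph (Fin k))).times,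
        (t < t' ↔ τ t < τ t') := by
      intro t ht t' ht'
      obtain ⟨a, b, ha1, hak, hb1, hbk, -, rfl⟩ := hptime t ht
      obtain ⟨a', b', ha1', hak', hb1', hbk', -, rfl⟩ := hptime t' ht'
      rw [hτval _ _ ha1 hak hb1 hbk, hτval _ _ ha1' hak' hb1' hbk']
      obtain ⟨hfa1, hfan⟩ := hfrange a ha1 hak
      obtain ⟨hfb1, hfbn⟩ := hfrange b hb1 hbk
      obtain ⟨hfa1', hfan'⟩ := hfrange a' ha1' hak'
      obtain ⟨hfb1', hfbn'⟩ := hfrange b' hb1' hbk'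
      rw [lex_lt_iff hk ha1 hb1 hbk ha1' hb1' hbk',
        lex_lt_iff hn hfa1 hfb1 hfbn hfa1' hfb1' hfbn']
      have hma := hfmono a a' ha1 hak ha1' hak'
      have hma' := hfmono a' a ha1' hak' ha1 hak
      have hmb := hfmono b b' hb1 hbk hb1' hbk'
      constructor
      · rintro (h | ⟨rfl, h⟩)
        · exact Or.inl (hma.mp h)
        · exact Or.inr ⟨rfl, hmb.mp h⟩
      · rintro (h | ⟨heq, h⟩)
        · exact Or.inl (hma.mpr h)
        · refine Or.inr ⟨?_, ?_⟩
          · by_contra hc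
            rcases Nat.lt_or_ge a a' with h' | h'
            · have := hma.mp h'; omega
            · have : a' < a := by omega
              have := hma'.mp this; omega
          · exact hmb.mpr (by omega)
    refine ⟨f, τ, ?_, ?_, ?_, ?_, ?_, hedge, ?_⟩
    · intro x hx
      simp only [ofSimpleGraph, Finset.coe_Icc, Set.mem_Icc] at hx ⊢
      exact hfrange x hx.1 hx.2
    · intro x hx y hy hxy
      simp only [ofSimpleGraph, Finset.coe_Icc, Set.mem_Icc] at hx hy
      by_contra hc
      rcases Nat.lt_or_ge x y with h | h
      · have := (hfmono x y hx.1 hx.2 hy.1 hy.2).mp h; omega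
      · have : y < x := by omega
        have := (hfmono y x hy.1 hy.2 hx.1 hx.2).mp this; omega
    · intro t ht
      simp only [Finset.mem_coe] at ht ⊢
      obtain ⟨p, hp, rfl⟩ := mem_ofSimpleGraph_times.mp ht
      have hne : p.1 ≠ p.2 := by simpa using hp
      have h1 := p.1.isLt
      have h2 := p.2.isLt
      refine mem_ofSimpleGraph_times.mpr ⟨(g p.1, g p.2), hadj _ _ hne, ?_⟩
      rw [hτval _ _ (by omega) (by omega) (by omega) (by omega), hfval, hfval]
    · intro t ht t' ht' htt
      simp only [Finset.mem_coe] at ht ht'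
      by_contra hc
      rcases Nat.lt_or_ge t t' with h | h
      · have := (horder t ht t' ht').mp h; omega
      · have : t' < t := by omega
        have := (horder t' ht' t ht).mp this; omega
    · intro u _; rfl
    · intro e he e' he'
      exact horder e.2.2 (Finset.mem_image_of_mem _ he) e'.2.2 (Finset.mem_image_of_mem _ he')
  · rintro ⟨f, τ, hmaps, hinj, -, -, -, hedge, -⟩
    have hV : ∀ i : Fin k, ((i : ℕ) + 1) ∈ (ofSimpleGraph k hk (⊤ : SimpleGraph (Fin k))).V := by
      intro i
      have := i.isLt
      simp only [ofSimpleGraph, Finset.mem_Icc]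
      omega
    have hbound : ∀ i : Fin k, 1 ≤ f ((i : ℕ) + 1) ∧ f ((i : ℕ) + 1) ≤ n := by
      intro i
      have := hmaps (Finset.mem_coe.mpr (hV i))
      simpa only [ofSimpleGraph, Finset.coe_Icc, Set.mem_Icc] using this
    have hlt : ∀ i : Fin k, f ((i : ℕ) + 1) - 1 < n := fun i => by have := hbound i; omega
    set ι : Fin k → Fin n := fun i => ⟨f ((i : ℕ) + 1) - 1, hlt i⟩ with hι
    have hιinj : Function.Injective ι := by
      intro i j hij
      have h1 := hbound i
      have h2 := hbound j
      have : f ((i : ℕ) + 1) = f ((j : ℕ) + 1) := by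
        have := congrArg Fin.val hij
        simp only [hι] at this
        omega
      have := hinj (Finset.mem_coe.mpr (hV i)) (Finset.mem_coe.mpr (hV j)) this
      exact Fin.ext (by omega)
    have hιadj : ∀ i j : Fin k, i ≠ j → H.Adj (ι i) (ι j) := by
      intro i j hij
      have hi := i.isLt
      have hj := j.isLt
      have hmem : ((i : ℕ) + 1, (j : ℕ) + 1, k ^ ((i : ℕ) + 1) + ((j : ℕ) + 1)) ∈
          (ofSimpleGraph k hk (⊤ : SimpleGraph (Fin k))).E :=
        mem_ofSimpleGraph_E.mpr ⟨(i, j), by simpa using hij, rfl⟩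
      obtain ⟨p, hp, heq⟩ := mem_ofSimpleGraph_E.mp (hedge _ hmem)
      simp only [Prod.mk.injEq] at heq
      have h1 := hbound i
      have h2 := hbound j
      have e1 : ι i = p.1 := Fin.ext (by simp only [hι]; omega)
      have e2 : ι j = p.2 := Fin.ext (by simp only [hι]; omega)
      rw [e1, e2]; exact hp
    refine ⟨Finset.univ.image ι, ?_, ?_⟩
    · intro x hx y hy hxy
      simp only [Finset.coe_image, Finset.coe_univ, Set.image_univ, Set.mem_range] at hx hy
      obtain ⟨i, rfl⟩ := hx
      obtain ⟨j, rfl⟩ := hy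
      exact hιadj i j fun h => hxy (by rw [h])
    · rw [Finset.card_image_of_injective _ hιinj, Finset.card_univ, Fintype.card_fin]

end TemporalGraph
end

section
/- Let g1 and g2 be temporal graph patterns. Then g1 ⊆_t g2 if and only if there exists an occurrence of nodeseq(g1) as a subsequence of enhseq(g2) whose induced mapping f_s from the nodes of g1 to the nodes of g2 is injective and label-preserving, and f_s(edgeseq(g1)) is a subsequence of edgeseq(g2), where f_s(edgeseq(g1)) denotes edgeseq(g1) with each edge endpoint u replaced by f_s(u). -/
namespace TemporalGraph

variable {σ : Type}

/-- `L` is the list of the edges of `g` in increasing timestamp order. -/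
def IsEdgeList (g : TemporalGraph σ) (L : List (ℕ × ℕ × ℕ)) : Prop :=
  (∀ e, e ∈ L ↔ e ∈ g.E) ∧ L.Pairwise fun e e' => e.2.2 < e'.2.2

/-- `nodeseq`: traversing the edges in increasing timestamp order (within an
edge, the source node before the destination node), list the nodes in order of
their first visit, each node appearing exactly once. -/
def nodeseqL (L : List (ℕ × ℕ × ℕ)) : List ℕ :=
  L.foldl (fun acc e =>
    let acc1 := if e.1 ∈ acc then acc else acc ++ [e.1]
    if e.2.1 ∈ acc1 then acc1 else acc1 ++ [e.2.1]) []

/-- `edgeseq`: the edges, in increasing timestamp order, as (source, destination)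
pairs. -/
def edgeseqL (L : List (ℕ × ℕ × ℕ)) : List (ℕ × ℕ) := L.map fun e => (e.1, e.2.1)

/-- `enhseq`: process the edges `(u, v, t)` in increasing timestamp order and,
for each edge, append `u` unless `u` is the last node currently in the sequence
or `u` is the source node of the previously processed edge, and then always
append `v`. -/
def enhseqL (L : List (ℕ × ℕ × ℕ)) : List ℕ :=
  (L.foldl (fun (p : List ℕ × Option ℕ) e =>
    let s1 := if p.1.getLast? = some e.1 ∨ p.2 = some e.1 then p.1 else p.1 ++ [e.1]
    (s1 ++ [e.2.1], some e.1)) (([] : List ℕ), (none : Option ℕ))).1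

/-
`nodeseq` is the list of first occurrences in the endpoint sequence of `edgeseq`, and taking
first occurrences commutes with an injective relabelling. `enhseq` skips a source `u` only when
`u` is the last node written or the source of the previous edge, so `u` has already been
written shortly before; hence `nodeseq` of any subsequence of the edges is a subsequence of
`enhseq`. A temporal embedding maps the time-sorted edge list of `g₁` onto a time-sorted
sublist of that of `g₂`, which gives both subsequence conditions. Conversely, the edge
subsequence matches the `i`-th edge of `g₁` with an edge of `g₂` on the image endpoints, and
sending the `i`-th timestamp of `g₁` to the timestamp of its match is strictly monotone because
both lists are sorted.
-/

theorem sublist_of_sublist_append_of_disjoint {α : Type*} {l xs r : List α}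
    (h : l.Sublist (xs ++ r)) (hdisj : ∀ x ∈ xs, x ∉ l) : l.Sublist r := by
  obtain ⟨l₁, l₂, rfl, h₁, h₂⟩ := List.sublist_append_iff.mp h
  cases l₁ with
  | nil => exact h₂
  | cons y l₁ => exact absurd (by simp) (hdisj y (h₁.subset (by simp)))

theorem sublist_of_subset_of_pairwise_lt {α β : Type*} [Preorder β] (key : α → β)
    {l₁ l₂ : List α} (h₁ : l₁.Pairwise (key · < key ·)) (h₂ : l₂.Pairwise (key · < key ·))
    (h : l₁ ⊆ l₂) : l₁.Sublist l₂ :=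
  haveI : Std.Irrefl fun a b : α => key a < key b := ⟨fun _ => lt_irrefl _⟩
  haveI : Std.Antisymm fun a b : α => key a < key b := ⟨fun _ _ h h' => (lt_asymm h h').elim⟩
  List.sublist_of_subperm_of_pairwise (List.subperm_of_subset h₁.nodup h) h₁ h₂

theorem time_lt_time_iff {L : List (ℕ × ℕ × ℕ)} (hL : L.Pairwise (·.2.2 < ·.2.2)) {i j : ℕ}
    (hi : i < L.length) (hj : j < L.length) : L[i].2.2 < L[j].2.2 ↔ i < j := by
  have h := (List.pairwise_map.mpr hL).sortedLT.getElem_lt_getElem_iff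
    (i := i) (j := j) (hi := by simpa using hi) (hj := by simpa using hj)
  rwa [List.getElem_map, List.getElem_map] at h

def endpoints (M : List (ℕ × ℕ)) : List ℕ := M.flatMap fun p => [p.1, p.2]

theorem endpoints_map (f : ℕ → ℕ) (M : List (ℕ × ℕ)) :
    endpoints (M.map fun p => (f p.1, f p.2)) = (endpoints M).map f := by
  simp [endpoints, List.flatMap_map, List.map_flatMap]

def firstOccurrences : List ℕ → List ℕ → List ℕ
  | _, [] => []
  | S, x :: xs => if x ∈ S then firstOccurrences S xs else x :: firstOccurrences (S ++ [x]) xs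

theorem not_mem_of_mem_firstOccurrences {S xs : List ℕ} {x : ℕ}
    (hx : x ∈ firstOccurrences S xs) : x ∉ S := by
  induction xs generalizing S with
  | nil => simp [firstOccurrences] at hx
  | cons y xs ih =>
    unfold firstOccurrences at hx
    split_ifs at hx with hy
    · exact ih hx
    · rcases List.mem_cons.mp hx with rfl | hx
      · exact hy
      · exact fun hS => ih hx (List.mem_append_left _ hS)

theorem firstOccurrences_cons (S : List ℕ) (x : ℕ) (xs : List ℕ) :
    ∃ A S', A.Sublist [x] ∧ x ∈ S' ∧ (∀ y ∈ S, y ∈ S') ∧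
      firstOccurrences S (x :: xs) = A ++ firstOccurrences S' xs := by
  by_cases hx : x ∈ S
  · exact ⟨[], S, by simp, hx, fun _ => id, by simp [firstOccurrences, hx]⟩
  · exact ⟨[x], S ++ [x], by simp, by simp, by simp_all, by simp [firstOccurrences, hx]⟩

theorem firstOccurrences_cons_cons (S : List ℕ) (u v : ℕ) (xs : List ℕ) :
    ∃ A S', A.Sublist [u, v] ∧ u ∈ S' ∧ v ∈ S' ∧
      firstOccurrences S (u :: v :: xs) = A ++ firstOccurrences S' xs := by
  obtain ⟨A, S₁, hA, hu, -, h₁⟩ := firstOccurrences_cons S u (v :: xs)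
  obtain ⟨B, S₂, hB, hv, hS, h₂⟩ := firstOccurrences_cons S₁ v xs
  exact ⟨A ++ B, S₂, hA.append hB, hS u hu, hv, by rw [h₁, h₂, List.append_assoc]⟩

theorem map_firstOccurrences (f : ℕ → ℕ) (S xs : List ℕ) (hf : Set.InjOn f {x | x ∈ S ++ xs}) :
    (firstOccurrences S xs).map f = firstOccurrences (S.map f) (xs.map f) := by
  induction xs generalizing S with
  | nil => simp [firstOccurrences]
  | cons x xs ih =>
    have hx : f x ∈ S.map f ↔ x ∈ S := by
      refine ⟨fun h => ?_, List.mem_map_of_mem⟩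
      obtain ⟨y, hy, hxy⟩ := List.mem_map.mp h
      exact hf (by simp [hy]) (by simp) hxy ▸ hy
    by_cases h : x ∈ S
    · simp [firstOccurrences, h, hx, ih S (hf.mono fun y => by simp; tauto)]
    · simp [firstOccurrences, h, hx, ih (S ++ [x]) (hf.mono fun y => by simp)]

/-- `last` is the last node written so far and `prev` the source of the previous edge. -/
def enhseqFrom : Option ℕ → Option ℕ → List (ℕ × ℕ) → List ℕ
  | _, _, [] => []
  | last, prev, (u, v) :: P =>
      (if last = some u ∨ prev = some u then [] else [u]) ++ v :: enhseqFrom (some v) (some u) P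

theorem pair_append_enhseqFrom_sublist (last prev : Option ℕ) (u v : ℕ) (P : List (ℕ × ℕ)) :
    ([u, v] ++ enhseqFrom (some v) (some u) P).Sublist
      (prev.toList ++ last.toList ++ enhseqFrom last prev ((u, v) :: P)) := by
  simp only [enhseqFrom]
  split_ifs with h
  · have hu : [u].Sublist (prev.toList ++ last.toList) := by
      rcases h with rfl | rfl <;> simp
    simpa using hu.append (List.Sublist.refl (v :: enhseqFrom (some v) (some u) P))
  · exact List.sublist_append_right _ _

/-- The prefix `prev.toList ++ last.toList` pays for a source that `enhseqFrom` skips. -/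
theorem firstOccurrences_endpoints_sublist {M P : List (ℕ × ℕ)} (h : M.Sublist P)
    (S : List ℕ) (last prev : Option ℕ) :
    (firstOccurrences S (endpoints M)).Sublist
      (prev.toList ++ last.toList ++ enhseqFrom last prev P) := by
  induction h generalizing S last prev with
  | slnil => simp [firstOccurrences, endpoints]
  | cons e _ ih =>
    obtain ⟨u, v⟩ := e
    exact (ih S (some v) (some u)).trans (pair_append_enhseqFrom_sublist last prev u v _)
  | cons_cons e _ ih =>
    obtain ⟨u, v⟩ := e
    obtain ⟨A, S', hA, hu, hv, heq⟩ := firstOccurrences_cons_cons S u v (endpoints _)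
    have hrest := sublist_of_sublist_append_of_disjoint (ih S' (some v) (some u)) (xs := [u, v])
      (by simpa using ⟨fun h => not_mem_of_mem_firstOccurrences h hu,
        fun h => not_mem_of_mem_firstOccurrences h hv⟩)
    simp only [endpoints, List.flatMap_cons] at heq ⊢
    rw [List.cons_append, List.cons_append, List.nil_append, heq]
    exact (hA.append hrest).trans (pair_append_enhseqFrom_sublist last prev u v _)

theorem nodeseqL_eq_firstOccurrences (L : List (ℕ × ℕ × ℕ)) :
    nodeseqL L = firstOccurrences [] (endpoints (edgeseqL L)) := by
  suffices h : ∀ acc : List ℕ, L.foldl (fun acc e =>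
      let acc1 := if e.1 ∈ acc then acc else acc ++ [e.1]
      if e.2.1 ∈ acc1 then acc1 else acc1 ++ [e.2.1]) acc =
        acc ++ firstOccurrences acc (endpoints (edgeseqL L)) from h []
  induction L with
  | nil => simp [firstOccurrences, endpoints, edgeseqL]
  | cons e L ih =>
    intro acc
    simp only [List.foldl_cons, ih, edgeseqL, List.map_cons, endpoints, List.flatMap_cons]
    split_ifs <;> simp_all [firstOccurrences]

theorem enhseqL_eq_enhseqFrom (L : List (ℕ × ℕ × ℕ)) :
    enhseqL L = enhseqFrom none none (edgeseqL L) := by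
  suffices h : ∀ (acc : List ℕ) (prev : Option ℕ), (L.foldl (fun (p : List ℕ × Option ℕ) e =>
      let s1 := if p.1.getLast? = some e.1 ∨ p.2 = some e.1 then p.1 else p.1 ++ [e.1]
      (s1 ++ [e.2.1], some e.1)) (acc, prev)).1 =
        acc ++ enhseqFrom acc.getLast? prev (edgeseqL L) from h [] none
  induction L with
  | nil => simp [enhseqFrom, edgeseqL]
  | cons e L ih =>
    intro acc prev
    simp only [List.foldl_cons, ih, edgeseqL, List.map_cons, enhseqFrom]
    split_ifs <;> simp_all [edgeseqL]

theorem nodeseqL_map_sublist_enhseqL {L₁ L₂ : List (ℕ × ℕ × ℕ)} {f : ℕ → ℕ}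
    (hf : Set.InjOn f {x | x ∈ endpoints (edgeseqL L₁)})
    (h : ((edgeseqL L₁).map fun p => (f p.1, f p.2)).Sublist (edgeseqL L₂)) :
    ((nodeseqL L₁).map f).Sublist (enhseqL L₂) := by
  rw [nodeseqL_eq_firstOccurrences, enhseqL_eq_enhseqFrom,
    map_firstOccurrences f [] _ (by simpa using hf), List.map_nil, ← endpoints_map]
  simpa using firstOccurrences_endpoints_sublist h [] none none

theorem mem_V_of_mem_endpoints {g : TemporalGraph σ} {L : List (ℕ × ℕ × ℕ)}
    (hL : ∀ e, e ∈ L ↔ e ∈ g.E) {x : ℕ} (hx : x ∈ endpoints (edgeseqL L)) : x ∈ g.V := by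
  simp only [endpoints, edgeseqL, List.flatMap_map, List.mem_flatMap, List.mem_cons,
    List.not_mem_nil, or_false] at hx
  obtain ⟨e, he, rfl | rfl⟩ := hx
  · exact g.mem_src e ((hL e).mp he)
  · exact g.mem_dst e ((hL e).mp he)

theorem IsTSubWith.map_sublist {g₁ g₂ : TemporalGraph σ} {f τ : ℕ → ℕ}
    {L₁ L₂ : List (ℕ × ℕ × ℕ)} (h : IsTSubWith g₁ g₂ f τ)
    (hL₁ : IsEdgeList g₁ L₁) (hL₂ : IsEdgeList g₂ L₂) :
    (L₁.map fun e => (f e.1, f e.2.1, τ e.2.2)).Sublist L₂ := by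
  obtain ⟨-, -, -, -, -, hedge, hord⟩ := h
  refine sublist_of_subset_of_pairwise_lt (·.2.2) ?_ hL₂.2 ?_
  · refine List.pairwise_map.mpr (hL₁.2.imp_of_mem fun ha hb hab => ?_)
    exact (hord _ ((hL₁.1 _).mp ha) _ ((hL₁.1 _).mp hb)).mp hab
  · intro _ hx
    obtain ⟨e, he, rfl⟩ := List.mem_map.mp hx
    exact (hL₂.1 _).mpr (hedge e ((hL₁.1 e).mp he))

theorem IsTSubWith.edgeseqL_map_sublist {g₁ g₂ : TemporalGraph σ} {f τ : ℕ → ℕ}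
    {L₁ L₂ : List (ℕ × ℕ × ℕ)} (h : IsTSubWith g₁ g₂ f τ)
    (hL₁ : IsEdgeList g₁ L₁) (hL₂ : IsEdgeList g₂ L₂) :
    ((edgeseqL L₁).map fun p => (f p.1, f p.2)).Sublist (edgeseqL L₂) := by
  simpa [edgeseqL, Function.comp_def] using (h.map_sublist hL₁ hL₂).map fun e => (e.1, e.2.1)

theorem exists_strictMonoOn_time {L L' : List (ℕ × ℕ × ℕ)} (f : ℕ → ℕ)
    (hL : L.Pairwise (·.2.2 < ·.2.2)) (hL' : L'.Pairwise (·.2.2 < ·.2.2))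
    (hmap : L'.map (fun e => (e.1, e.2.1)) = L.map (fun e => (f e.1, f e.2.1))) :
    ∃ τ : ℕ → ℕ, StrictMonoOn τ {t | ∃ e ∈ L, e.2.2 = t} ∧
      ∀ e ∈ L, (f e.1, f e.2.1, τ e.2.2) ∈ L' := by
  have hlen : L.length = L'.length := by simpa using (congrArg List.length hmap).symm
  have hnodup : (L.map (·.2.2)).Nodup := (List.pairwise_map.mpr hL).nodup
  set τ := fun t => (L'.map (·.2.2)).getD ((L.map (·.2.2)).idxOf t) 0
  have hτ : ∀ i (hi : i < L.length), τ L[i].2.2 = L'[i].2.2 := by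
    intro i hi
    have := hnodup.idxOf_getElem i (by simpa using hi)
    simp only [List.getElem_map] at this
    simp [τ, this, hlen ▸ hi]
  have hpair : ∀ i (hi : i < L.length), L'[i].1 = f L[i].1 ∧ L'[i].2.1 = f L[i].2.1 := by
    intro i hi
    have := congrArg (·[i]?) hmap
    simpa [hi, hlen ▸ hi] using this
  refine ⟨τ, ?_, ?_⟩
  · rintro _ ⟨e, he, rfl⟩ _ ⟨e', he', rfl⟩ hlt
    obtain ⟨i, hi, rfl⟩ := List.mem_iff_getElem.mp he
    obtain ⟨j, hj, rfl⟩ := List.mem_iff_getElem.mp he'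
    rw [hτ i hi, hτ j hj]
    exact (time_lt_time_iff hL' (hlen ▸ hi) (hlen ▸ hj)).mpr
      ((time_lt_time_iff hL hi hj).mp hlt)
  · intro e he
    obtain ⟨i, hi, rfl⟩ := List.mem_iff_getElem.mp he
    rw [hτ i hi, ← (hpair i hi).1, ← (hpair i hi).2]
    exact List.getElem_mem _

theorem isTSub_of_edgeseqL_map_sublist {g₁ g₂ : TemporalGraph σ} {f : ℕ → ℕ}
    {L₁ L₂ : List (ℕ × ℕ × ℕ)} (hi₁ : ∀ v ∈ g₁.V, Incident g₁.E v)
    (hL₁ : IsEdgeList g₁ L₁) (hL₂ : IsEdgeList g₂ L₂)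
    (hf : Set.InjOn f ↑g₁.V) (hA : ∀ u ∈ g₁.V, g₁.A u = g₂.A (f u))
    (h : ((edgeseqL L₁).map fun p => (f p.1, f p.2)).Sublist (edgeseqL L₂)) :
    IsTSub g₁ g₂ := by
  simp only [edgeseqL, List.map_map] at h
  obtain ⟨L', hL'L₂, hmap⟩ := List.sublist_map_iff.mp h
  obtain ⟨τ, hτ, hedge⟩ := exists_strictMonoOn_time f hL₁.2 (hL₂.2.sublist hL'L₂) hmap.symm
  have htimes : {t | ∃ e ∈ L₁, e.2.2 = t} = ↑g₁.times := by
    ext t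
    simp [times, hL₁.1]
  rw [htimes] at hτ
  have hedge : ∀ e ∈ g₁.E, (f e.1, f e.2.1, τ e.2.2) ∈ g₂.E := fun e he =>
    (hL₂.1 _).mp (hL'L₂.subset (hedge e ((hL₁.1 e).mpr he)))
  refine ⟨f, τ, ?_, hf, ?_, hτ.injOn, hA, hedge, fun e he e' he' => ?_⟩
  · intro v hv
    obtain ⟨e, he, rfl | rfl⟩ := hi₁ v hv
    · exact g₂.mem_src _ (hedge e he)
    · exact g₂.mem_dst _ (hedge e he)
  · rintro _ ht
    obtain ⟨e, he, rfl⟩ := Finset.mem_image.mp ht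
    exact Finset.mem_image.mpr ⟨_, hedge e he, rfl⟩
  · exact (hτ.lt_iff_lt (Finset.mem_image_of_mem _ he) (Finset.mem_image_of_mem _ he')).symm

theorem tsub_iff_subsequences_general (g₁ g₂ : TemporalGraph σ)
    (hi₁ : ∀ v ∈ g₁.V, Incident g₁.E v)
    (L₁ L₂ : List (ℕ × ℕ × ℕ)) (hL₁ : IsEdgeList g₁ L₁) (hL₂ : IsEdgeList g₂ L₂) :
    IsTSub g₁ g₂ ↔
      ∃ fs : ℕ → ℕ,
        Set.InjOn fs ↑g₁.V ∧
        (∀ u ∈ g₁.V, g₁.A u = g₂.A (fs u)) ∧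
        ((nodeseqL L₁).map fs).Sublist (enhseqL L₂) ∧
        ((edgeseqL L₁).map fun p => (fs p.1, fs p.2)).Sublist (edgeseqL L₂) := by
  constructor
  · rintro ⟨f, τ, hfτ⟩
    have hedges := hfτ.edgeseqL_map_sublist hL₁ hL₂
    refine ⟨f, hfτ.2.1, hfτ.2.2.2.2.1, nodeseqL_map_sublist_enhseqL ?_ hedges, hedges⟩
    exact hfτ.2.1.mono fun x hx => mem_V_of_mem_endpoints hL₁.1 hx
  · rintro ⟨fs, hinj, hA, -, hedges⟩
    exact isTSub_of_edgeseqL_map_sublist hi₁ hL₁ hL₂ hinj hA hedges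

/-- Let `g₁` and `g₂` be temporal graph patterns (with every node
of `g₁` incident to an edge, so that the traversal visits all of its nodes).
Then `g₁ ⊆_t g₂` iff there is an occurrence of `nodeseq(g₁)` as a subsequence
of `enhseq(g₂)` whose induced node mapping `fs` is injective and
label-preserving and such that `fs(edgeseq(g₁))` is a subsequence of
`edgeseq(g₂)` (where `fs(edgeseq(g₁))` replaces each edge endpoint `u` by
`fs u`). -/
theorem tsub_iff_subsequences (g₁ g₂ : TemporalGraph σ)
    (hp₁ : g₁.IsPattern) (hp₂ : g₂.IsPattern)
    (hi₁ : ∀ v ∈ g₁.V, Incident g₁.E v)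
    (L₁ L₂ : List (ℕ × ℕ × ℕ)) (hL₁ : IsEdgeList g₁ L₁) (hL₂ : IsEdgeList g₂ L₂) :
    IsTSub g₁ g₂ ↔
      ∃ fs : ℕ → ℕ,
        Set.InjOn fs ↑g₁.V ∧
        (∀ u ∈ g₁.V, g₁.A u = g₂.A (fs u)) ∧
        ((nodeseqL L₁).map fs).Sublist (enhseqL L₂) ∧
        ((edgeseqL L₁).map fun p => (fs p.1, fs p.2)).Sublist (edgeseqL L₂) :=
  tsub_iff_subsequences_general g₁ g₂ hi₁ L₁ L₂ hL₁ hL₂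

end TemporalGraph
end

section
/- Let g1 ⊆_t g2 be temporal graph patterns, each with at least one edge, let G be a temporal graph, and let G'2 be a match of g2 in G. Then there exists a match G'1 of g1 in G all of whose edges are edges of G'2, and every edge of R(G, G'2) is an edge of R(G, G'1); in particular |R(G, G'1)| ≥ |R(G, G'2)|. -/
namespace TemporalGraph

variable {σ : Type}

/-- Let `g₁ ⊆_t g₂` be temporal graph patterns, each with at
least one edge, `G` a temporal graph, and `G₂'` a match of `g₂` in `G`.  Then
there is a match `G₁'` of `g₁` in `G` all of whose edges are edges of `G₂'`,
and every edge of `R(G, G₂')` is an edge of `R(G, G₁')`; in particular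
`|R(G, G₁')| ≥ |R(G, G₂')|`. -/
theorem match_contains_submatch (g₁ g₂ : TemporalGraph σ)
    (hp₁ : g₁.IsPattern) (hp₂ : g₂.IsPattern)
    (he₁ : g₁.E.Nonempty) (he₂ : g₂.E.Nonempty)
    (hsub : IsTSub g₁ g₂)
    (G G₂' : TemporalGraph σ) (hm : MatchIn G₂' G g₂) :
    ∃ G₁' : TemporalGraph σ, MatchIn G₁' G g₁ ∧ G₁'.E ⊆ G₂'.E ∧
      resEdges G G₂' ⊆ resEdges G G₁' ∧
      (resEdges G G₂').card ≤ (resEdges G G₁').card := by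
  obtain ⟨hG2sub, f', τ', ⟨hts', hbf', hbτ'⟩⟩ := hm
  obtain ⟨f, τ, hts⟩ := hsub
  obtain ⟨hfV, hfInj, hτT, hτInj, hA, hE, hOrd⟩ := hts
  obtain ⟨hfV', hfInj', hτT', hτInj', hA', hE', hOrd'⟩ := hts'
  obtain ⟨hV2, hE2, hA2⟩ := hG2sub
  -- the edge map
  set ε : ℕ × ℕ × ℕ → ℕ × ℕ × ℕ := fun e => (f' (f e.1), f' (f e.2.1), τ' (τ e.2.2)) with hε
  have htmem : ∀ e ∈ g₁.E, e.2.2 ∈ g₁.times := fun e he =>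
    Finset.mem_image.mpr ⟨e, he, rfl⟩
  have htmem₂ : ∀ e ∈ g₂.E, e.2.2 ∈ g₂.times := fun e he =>
    Finset.mem_image.mpr ⟨e, he, rfl⟩
  have hEg2 : ∀ e ∈ g₁.E, (f e.1, f e.2.1, τ e.2.2) ∈ g₂.E := hE
  have hεE : ∀ e ∈ g₁.E, ε e ∈ G₂'.E := by
    intro e he
    exact hE' _ (hEg2 e he)
  refine ⟨⟨g₁.V.image (fun u => f' (f u)), g₁.E.image ε, G.A, ?_, ?_, ?_⟩, ?_, ?_, ?_, ?_⟩
  · intro e he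
    obtain ⟨a, ha, rfl⟩ := Finset.mem_image.mp he
    exact Finset.mem_image.mpr ⟨a.1, g₁.mem_src a ha, rfl⟩
  · intro e he
    obtain ⟨a, ha, rfl⟩ := Finset.mem_image.mp he
    exact Finset.mem_image.mpr ⟨a.2.1, g₁.mem_dst a ha, rfl⟩
  · intro e he e' he' hte
    obtain ⟨a, ha, rfl⟩ := Finset.mem_image.mp he
    obtain ⟨b, hb, rfl⟩ := Finset.mem_image.mp he'
    have h1 : τ a.2.2 = τ b.2.2 := hτInj'
      (hτT (by exact_mod_cast htmem a ha)) (hτT (by exact_mod_cast htmem b hb)) hte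
    have h2 : a.2.2 = b.2.2 := hτInj
      (by exact_mod_cast htmem a ha) (by exact_mod_cast htmem b hb) h1
    rw [g₁.time_inj a ha b hb h2]
  · -- MatchIn
    constructor
    · refine ⟨?_, ?_, rfl⟩
      · intro x hx
        obtain ⟨u, hu, rfl⟩ := Finset.mem_image.mp hx
        exact hV2 (by exact_mod_cast hfV' (hfV (by exact_mod_cast hu)))
      · intro e he
        obtain ⟨a, ha, rfl⟩ := Finset.mem_image.mp he
        exact hE2 (hεE a ha)
    · refine ⟨fun u => f' (f u), fun t => τ' (τ t), ?_, ?_, ?_⟩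
      · refine ⟨?_, ?_, ?_, ?_, ?_, ?_, ?_⟩
        · intro u hu
          exact_mod_cast Finset.mem_image.mpr ⟨u, by exact_mod_cast hu, rfl⟩
        · intro a ha b hb h
          exact hfInj ha hb (hfInj' (hfV ha) (hfV hb) h)
        · intro t ht
          show _ ∈ (↑((g₁.E.image ε).image fun e => e.2.2) : Set ℕ)
          obtain ⟨e, he, rfl⟩ := Finset.mem_image.mp (by exact_mod_cast ht : t ∈ g₁.times)
          exact_mod_cast Finset.mem_image.mpr ⟨ε e, Finset.mem_image.mpr ⟨e, he, rfl⟩, rfl⟩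
        · intro a ha b hb h
          exact hτInj ha hb (hτInj' (hτT ha) (hτT hb) h)
        · intro u hu
          rw [hA u hu, hA' (f u) (by exact_mod_cast hfV (by exact_mod_cast hu)), hA2]
        · intro e he
          exact Finset.mem_image.mpr ⟨e, he, rfl⟩
        · intro e he e' he'
          rw [hOrd e he e' he']
          exact hOrd' _ (hEg2 e he) _ (hEg2 e' he')
      · have : (↑(g₁.V.image fun u => f' (f u)) : Set ℕ) = (fun u => f' (f u)) '' ↑g₁.V :=
          Finset.coe_image
        show Set.BijOn _ _ (↑(g₁.V.image fun u => f' (f u)) : Set ℕ)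
        rw [this]
        refine Set.InjOn.bijOn_image ?_
        intro a ha b hb h
        exact hfInj ha hb (hfInj' (hfV ha) (hfV hb) h)
      · have htimes : ((g₁.E.image ε).image fun e => e.2.2) =
            g₁.times.image fun t => τ' (τ t) := by
          simp only [times, Finset.image_image]
          rfl
        show Set.BijOn _ _ (↑((g₁.E.image ε).image fun e => e.2.2) : Set ℕ)
        rw [htimes]
        have : (↑(g₁.times.image fun t => τ' (τ t)) : Set ℕ) =
            (fun t => τ' (τ t)) '' ↑g₁.times := Finset.coe_image
        rw [this]
        refine Set.InjOn.bijOn_image ?_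
        intro a ha b hb h
        exact hτInj ha hb (hτInj' (hτT ha) (hτT hb) h)
  · intro e he
    obtain ⟨a, ha, rfl⟩ := Finset.mem_image.mp he
    exact hεE a ha
  · have hmax : (Finset.sup (g₁.E.image ε) fun e => e.2.2) ≤ maxTime G₂' := by
      refine Finset.sup_mono ?_
      intro e he
      obtain ⟨a, ha, rfl⟩ := Finset.mem_image.mp he
      exact hεE a ha
    intro e he
    simp only [resEdges, Finset.mem_filter] at he ⊢
    exact ⟨he.1, lt_of_le_of_lt hmax he.2⟩
  · exact Finset.card_le_card (by
      intro e he
      simp only [resEdges, Finset.mem_filter] at he ⊢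
      refine ⟨he.1, lt_of_le_of_lt (Finset.sup_mono ?_) he.2⟩
      intro x hx
      obtain ⟨a, ha, rfl⟩ := Finset.mem_image.mp hx
      exact hεE a ha)



end TemporalGraph
end
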